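/- arXiv:hep-th/9411160 — 9 statements merged into one kernel-verified Lean document; each statement's English description precedes it below -/
import Mathlib

section
/- Trigonometric case of the functional equation (\ref{Calogero}) used to prove Theorem 2.1: for all complex numbers x, y, z with sinh x ≠ 0, sinh y ≠ 0, sinh(x+y) ≠ 0 and sinh z ≠ 0, one has (−1/sinh²x)·(coth y − coth z) + (1/sinh²y)·(coth x − coth z) = (1/sinh²y − 1/sinh²x)·(coth(x+y) − coth z), where coth u = cosh u / sinh u. -/
open Complex

/- In terms of `a = coth x`, `b = coth y`, `c = coth z` one has `1/sinh²x = a² - 1`,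
`1/sinh²y = b² - 1` and `coth (x + y) (a + b) = 1 + a b`, after which the identity is
polynomial in `a`, `b`, `c`, `coth (x + y)`. -/

theorem Complex.one_div_sinh_sq {x : ℂ} (hx : sinh x ≠ 0) :
    1 / sinh x ^ 2 = (cosh x / sinh x) ^ 2 - 1 := by
  field_simp
  linear_combination -cosh_sq_sub_sinh_sq x

theorem Complex.coth_add_mul {x y : ℂ} (hx : sinh x ≠ 0) (hy : sinh y ≠ 0)
    (hxy : sinh (x + y) ≠ 0) :
    cosh (x + y) / sinh (x + y) * (cosh x / sinh x + cosh y / sinh y)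
      = 1 + cosh x / sinh x * (cosh y / sinh y) := by
  field_simp
  rw [sinh_add, cosh_add]
  ring

theorem calogero_identity_of_mul_add_eq {R : Type*} [CommRing R] {a b c t : R}
    (ht : t * (a + b) = 1 + a * b) :
    -(a ^ 2 - 1) * (b - c) + (b ^ 2 - 1) * (a - c) = (b ^ 2 - 1 - (a ^ 2 - 1)) * (t - c) := by
  linear_combination (a - b) * ht

theorem trigonometric_functional_equation_general (x y z : ℂ)
    (hx : Complex.sinh x ≠ 0) (hy : Complex.sinh y ≠ 0)
    (hxy : Complex.sinh (x + y) ≠ 0) :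
    (-(1 / Complex.sinh x ^ 2)) * (Complex.cosh y / Complex.sinh y - Complex.cosh z / Complex.sinh z)
      + (1 / Complex.sinh y ^ 2) * (Complex.cosh x / Complex.sinh x - Complex.cosh z / Complex.sinh z)
      = (1 / Complex.sinh y ^ 2 - 1 / Complex.sinh x ^ 2)
          * (Complex.cosh (x + y) / Complex.sinh (x + y) - Complex.cosh z / Complex.sinh z) := by
  rw [one_div_sinh_sq hx, one_div_sinh_sq hy]
  exact calogero_identity_of_mul_add_eq (coth_add_mul hx hy hxy)

/-- Trigonometric case of the functional equation
`Φ'(x,z)Φ(y,z) − Φ(x,z)Φ'(y,z) = (V(y) − V(x))Φ(x+y,z)`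
with `V(x) = 1/sinh²x` and `Φ(x,z) = coth x − coth z`. -/
theorem trigonometric_functional_equation (x y z : ℂ)
    (hx : Complex.sinh x ≠ 0) (hy : Complex.sinh y ≠ 0)
    (hxy : Complex.sinh (x + y) ≠ 0) (hz : Complex.sinh z ≠ 0) :
    (-(1 / Complex.sinh x ^ 2)) * (Complex.cosh y / Complex.sinh y - Complex.cosh z / Complex.sinh z)
      + (1 / Complex.sinh y ^ 2) * (Complex.cosh x / Complex.sinh x - Complex.cosh z / Complex.sinh z)
      = (1 / Complex.sinh y ^ 2 - 1 / Complex.sinh x ^ 2)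
          * (Complex.cosh (x + y) / Complex.sinh (x + y) - Complex.cosh z / Complex.sinh z) :=
  trigonometric_functional_equation_general x y z hx hy hxy
end

section
/- Trigonometric Lamé identity: fix z ∈ ℂ with sinh z ≠ 0 and set c = coth z = cosh z / sinh z. Define Φ(x) = (coth x − c)·exp(c·x). Then for every x ∈ ℂ with sinh x ≠ 0 the second complex derivative of Φ satisfies Φ''(x) − (2/sinh²x)·Φ(x) = c²·Φ(x). -/
/-!
Write `Φ = g · e^{c·}` with `g = coth − c`. Then `Φ'' = (g'' + 2c g' + c² g) e^{c·}`, and since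
`g' = −1/sinh²` and `g'' = 2 cosh/sinh³`, one gets `g'' + 2c g' = (2/sinh²) g`.
-/

open Complex Filter Topology

theorem deriv_deriv_mul_exp_const_mul {g g' : ℂ → ℂ} {g'' c x : ℂ}
    (hg : ∀ᶠ w in 𝓝 x, HasDerivAt g (g' w) w) (hg' : HasDerivAt g' g'' x) :
    deriv (deriv fun w => g w * exp (c * w)) x
      = (g'' + 2 * c * g' x + c ^ 2 * g x) * exp (c * x) := by
  have hexp (w : ℂ) : HasDerivAt (fun w => exp (c * w)) (exp (c * w) * c) w := by
    simpa using ((hasDerivAt_id w).const_mul c).cexp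
  have hderiv : deriv (fun w => g w * exp (c * w)) =ᶠ[𝓝 x]
      fun w => (g' w + c * g w) * exp (c * w) :=
    hg.mono fun w hw => by
      rw [(hw.fun_mul (hexp w)).deriv]
      ring
  rw [hderiv.deriv_eq, ((hg'.fun_add (hg.self_of_nhds.const_mul c)).fun_mul (hexp x)).deriv]
  ring

theorem hasDerivAt_cosh_div_sinh {x : ℂ} (hx : sinh x ≠ 0) :
    HasDerivAt (fun w => cosh w / sinh w) (-(sinh x ^ 2)⁻¹) x := by
  refine ((hasDerivAt_cosh x).fun_div (hasDerivAt_sinh x) hx).congr_deriv ?_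
  field_simp
  linear_combination -cosh_sq_sub_sinh_sq x

theorem hasDerivAt_neg_inv_sinh_sq {x : ℂ} (hx : sinh x ≠ 0) :
    HasDerivAt (fun w => -(sinh w ^ 2)⁻¹) (2 * cosh x / sinh x ^ 3) x := by
  refine (((hasDerivAt_sinh x).fun_pow 2).fun_inv (pow_ne_zero 2 hx)).fun_neg.congr_deriv ?_
  field_simp
  ring

theorem trigonometric_lame_identity_general (z : ℂ) :
    ∀ x : ℂ, Complex.sinh x ≠ 0 →
      deriv (deriv (fun w : ℂ =>
          (Complex.cosh w / Complex.sinh w - Complex.cosh z / Complex.sinh z)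
            * Complex.exp (Complex.cosh z / Complex.sinh z * w))) x
        - (2 / Complex.sinh x ^ 2) *
            ((Complex.cosh x / Complex.sinh x - Complex.cosh z / Complex.sinh z)
              * Complex.exp (Complex.cosh z / Complex.sinh z * x))
      = (Complex.cosh z / Complex.sinh z) ^ 2 *
          ((Complex.cosh x / Complex.sinh x - Complex.cosh z / Complex.sinh z)
            * Complex.exp (Complex.cosh z / Complex.sinh z * x)) := by
  intro x hx
  set c := cosh z / sinh z
  have hcoth : ∀ᶠ w in 𝓝 x,
      HasDerivAt (fun w => cosh w / sinh w - c) (-(sinh w ^ 2)⁻¹) w :=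
    (continuous_sinh.continuousAt.eventually_ne hx).mono fun w hw =>
      (hasDerivAt_cosh_div_sinh hw).sub_const c
  rw [deriv_deriv_mul_exp_const_mul hcoth (hasDerivAt_neg_inv_sinh_sq hx)]
  field_simp
  ring

/-- Trigonometric limit of the Lamé equation: with `c = coth z` and
`Φ(x) = (coth x − c)·e^{c·x}` one has `Φ''(x) − (2/sinh²x)Φ(x) = c²Φ(x)`
whenever `sinh x ≠ 0`. -/
theorem trigonometric_lame_identity (z : ℂ) (hz : Complex.sinh z ≠ 0) :
    ∀ x : ℂ, Complex.sinh x ≠ 0 →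
      deriv (deriv (fun w : ℂ =>
          (Complex.cosh w / Complex.sinh w - Complex.cosh z / Complex.sinh z)
            * Complex.exp (Complex.cosh z / Complex.sinh z * w))) x
        - (2 / Complex.sinh x ^ 2) *
            ((Complex.cosh x / Complex.sinh x - Complex.cosh z / Complex.sinh z)
              * Complex.exp (Complex.cosh z / Complex.sinh z * x))
      = (Complex.cosh z / Complex.sinh z) ^ 2 *
          ((Complex.cosh x / Complex.sinh x - Complex.cosh z / Complex.sinh z)
            * Complex.exp (Complex.cosh z / Complex.sinh z * x)) :=
  trigonometric_lame_identity_general z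
end

section
/- Conjugation identity for the matrix M in the trigonometric case (used in the proof of Proposition 4.4): let x₁,…,x_N ∈ ℂ with sinh(x_i − x_j) ≠ 0 for i ≠ j, let p₁,…,p_N, λ₁,…,λ_N ∈ ℂ, and let f_{ij} ∈ ℂ (i ≠ j) be arbitrary. Define the N×N matrices M by M_{ii} = −λ_i, M_{ij} = −f_{ij}/sinh²(x_i − x_j) (i ≠ j), L⁺ by L⁺_{ii} = p_i − 2, L⁺_{ij} = f_{ij}(coth(x_i − x_j) − 1) (i ≠ j), P = diag(p₁,…,p_N), and E = diag(e^{2x₁},…,e^{2x_N}). Then E⁻¹·M·E = M + 2L⁺ − 2P + 4·(identity matrix). -/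
open Matrix Finset

lemma key_scalar (u fv : ℂ) (hs : Complex.sinh u ≠ 0) :
    Complex.exp (-(2*u)) * (-fv / Complex.sinh u ^ 2) =
      -fv / Complex.sinh u ^ 2
        + 2 * (fv * (Complex.cosh u / Complex.sinh u - 1)) := by
  have e1 : Complex.exp u * Complex.exp (-u) = 1 := by
    rw [← Complex.exp_add]; simp
  have e2 : Complex.exp (-u) * Complex.exp (-u) = Complex.exp (-(2*u)) := by
    rw [← Complex.exp_add]; ring_nf
  have key : Complex.exp (-(2*u)) =
      1 - 2 * Complex.sinh u * (Complex.cosh u - Complex.sinh u) := by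
    rw [Complex.cosh, Complex.sinh]
    linear_combination e1 - e2
  rw [key]
  field_simp
  ring

/-- Conjugation identity `E⁻¹·M·E = M + 2L⁺ − 2P + 4·I` in the trigonometric
spin Calogero–Moser system (key step in the proof of Proposition 4.4). -/
theorem trigonometric_conjugation_M (N : ℕ)
    (x p lam : Fin N → ℂ) (f : Fin N → Fin N → ℂ)
    (hx : ∀ i j : Fin N, i ≠ j → Complex.sinh (x i - x j) ≠ 0) :
    let M : Matrix (Fin N) (Fin N) ℂ :=
      Matrix.of fun i j => if i = j then -lam i else
        -f i j / Complex.sinh (x i - x j) ^ 2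
    let Lplus : Matrix (Fin N) (Fin N) ℂ :=
      Matrix.of fun i j => if i = j then p i - 2 else
        f i j * (Complex.cosh (x i - x j) / Complex.sinh (x i - x j) - 1)
    let P : Matrix (Fin N) (Fin N) ℂ := Matrix.diagonal p
    let E : Matrix (Fin N) (Fin N) ℂ := Matrix.diagonal fun i => Complex.exp (2 * x i)
    E⁻¹ * M * E = M + (2 : ℂ) • Lplus - (2 : ℂ) • P
      + (4 : ℂ) • (1 : Matrix (Fin N) (Fin N) ℂ) := by
  intro M Lplus P E
  have hEinv : E⁻¹ = Matrix.diagonal fun i => Complex.exp (-(2 * x i)) := by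
    apply Matrix.inv_eq_right_inv
    rw [Matrix.diagonal_mul_diagonal]
    ext i j
    by_cases h : i = j <;>
      simp [Matrix.diagonal, Matrix.one_apply, h, ← Complex.exp_add]
  rw [hEinv]
  ext i j
  simp only [Matrix.diagonal_mul, Matrix.mul_diagonal, Matrix.diagonal_mul, Matrix.mul_diagonal, Matrix.of_apply,
    Matrix.add_apply, Matrix.sub_apply, Matrix.smul_apply, Matrix.diagonal_apply,
    Matrix.one_apply, smul_eq_mul, M, Lplus, P, E]
  by_cases h : i = j
  · subst h
    simp only [if_true]
    have h1 : Complex.exp (-(2 * x i)) * Complex.exp (2 * x i) = 1 := by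
      rw [← Complex.exp_add]; simp
    linear_combination (-lam i) * h1
  · simp only [if_neg h, if_neg h]
    have := key_scalar (x i - x j) (f i j) (hx i j h)
    calc Complex.exp (-(2 * x i)) * (-f i j / Complex.sinh (x i - x j) ^ 2) *
          Complex.exp (2 * x j)
        = Complex.exp (-(2 * (x i - x j))) *
            (-f i j / Complex.sinh (x i - x j) ^ 2) := by
          rw [mul_comm _ (Complex.exp (2 * x j)), ← mul_assoc, ← Complex.exp_add]
          ring_nf
      _ = -f i j / Complex.sinh (x i - x j) ^ 2 +
            2 * (f i j * (Complex.cosh (x i - x j) / Complex.sinh (x i - x j) - 1)) := this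
      _ = _ := by ring
end

section
/- Proposition 3.2 (structure of the trigonometric spectral curve): let x₁,…,x_N ∈ ℂ with sinh(x_i − x_j) ≠ 0 for i ≠ j, p₁,…,p_N ∈ ℂ, and a_i, b_i ∈ ℂˡ with b_i·a_i = 2. Set F_{ij} = b_i·a_j and define A by A_{ii} = p_i, A_{ij} = F_{ij}·coth(x_i − x_j) (i ≠ j). Then there exist polynomials R₀, R₁, …, R_l ∈ ℂ[k] with deg R_m ≤ N − m, and R₀(k) = det(2k·I + A) of degree exactly N, such that for all k, w ∈ ℂ one has det(2k·I + A − w·F) = Σ_{m=0}^{l} wᵐ·R_m(k). Moreover, for all k ∈ ℂ, det(2k·I + A + F) = det(2(k+2)·I + A − F). -/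
/-!
Every entry of `2k + A - wF` is affine in `(k, w)`, so its determinant has total degree at most `N`,
which bounds `deg R_m` by `N - m`. Since `F = β α` factors through `ℂˡ` (`β` has rows `bᵢ`, `α` has
columns `aⱼ`), the determinant is that of the block matrix `[[1, α], [w β, 2k + A]]` (Schur
complement), in which `w` occurs in only `l` columns; so its degree in `w` is at most `l`.

The relation at `w = ±1` holds because `diag (exp (2xᵢ))` conjugates `2k + A + F` into
`2(k + 2) + A - F`: off the diagonal this is `coth u + 1 = exp (2u) (coth u - 1)`, and on the
diagonal it is `Fᵢᵢ = 2`.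
-/

open Matrix Finset Polynomial

theorem Matrix.det_mem_graded {ι R S n : Type*} [AddCommMonoid ι] [CommRing R] [SetLike S R]
    [AddSubgroupClass S R] (A : ι → S) [SetLike.GradedMonoid A] [Fintype n] [DecidableEq n]
    (M : Matrix n n R) (d : n → ι) (h : ∀ i j, M i j ∈ A (d j)) :
    M.det ∈ A (∑ j, d j) := by
  rw [det_apply]
  refine sum_mem fun σ _ => ?_
  rw [Units.smul_def]
  exact zsmul_mem (SetLike.prod_mem_graded A d _ fun j _ => h (σ j) j) _

namespace Polynomial

variable {R n m : Type*} [CommRing R] [Fintype n] [DecidableEq n] [Fintype m] [DecidableEq m]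

instance : SetLike.GradedMonoid (degreeLE R) where
  one_mem := mem_degreeLE.2 degree_one_le
  mul_mem _ _ _ _ hp hq :=
    mem_degreeLE.2 <| (degree_mul_le _ _).trans <|
      add_le_add (mem_degreeLE.1 hp) (mem_degreeLE.1 hq)

variable (R) in
/-- Bivariate polynomials `P ∈ R[X][Y]` of total degree at most `n`: `(P.coeff j).coeff i` is the
coefficient of `Xⁱ Yʲ`. -/
def totalDegreeLE (n : ℕ) : AddSubgroup R[X][X] where
  carrier := {P | ∀ i j, n < i + j → (P.coeff j).coeff i = 0}
  zero_mem' _ _ _ := by simp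
  add_mem' hP hQ i j hij := by simp [hP i j hij, hQ i j hij]
  neg_mem' hP i j hij := by simp [hP i j hij]

instance : SetLike.GradedMonoid (totalDegreeLE R) where
  one_mem i j hij := by
    rcases j with _ | j
    · simp [coeff_one, show i ≠ 0 by omega]
    · simp [coeff_one]
  mul_mem a b P Q hP hQ i j hij := by
    simp only [coeff_mul, finsetSum_coeff]
    refine sum_eq_zero fun jj hjj => sum_eq_zero fun ii hii => ?_
    rw [HasAntidiagonal.mem_antidiagonal] at hjj hii
    by_cases ha : a < ii.1 + jj.1
    · rw [hP _ _ ha, zero_mul]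
    · rw [hQ _ _ (by omega), mul_zero]

theorem degree_coeff_le_of_mem_totalDegreeLE {n : ℕ} {P : R[X][X]} (hP : P ∈ totalDegreeLE R n)
    (m : ℕ) : (P.coeff m).degree ≤ (n - m : ℕ) :=
  (degree_le_iff_coeff_zero _ _).2 fun i hi => hP i m (by norm_cast at hi; omega)

theorem X_mul_C_C_add_C_mem_totalDegreeLE {p : R[X]} (hp : p.degree ≤ 1) (c : R) :
    X * C (C c) + C p ∈ totalDegreeLE R 1 := by
  intro i j hij
  rcases j with _ | _ | j
  · simpa using coeff_eq_zero_of_degree_lt (hp.trans_lt (by exact_mod_cast hij))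
  · simp [coeff_C, show i ≠ 0 by omega]
  · simp

theorem degree_det_X_smul_mul_add_C_le (U : Matrix n m R) (V : Matrix m n R) (K : Matrix n n R) :
    (det ((X : R[X]) • (U * V).map C + K.map C)).degree ≤ Fintype.card m := by
  have hSchur : (X : R[X]) • (U * V).map C + K.map C
      = K.map C - (-((X : R[X]) • U.map C)) * V.map C := by
    rw [Matrix.map_mul, Matrix.neg_mul, sub_neg_eq_add, Matrix.smul_mul, add_comm]
  rw [hSchur, ← det_fromBlocks_one₁₁, ← mem_degreeLE]
  convert det_mem_graded (degreeLE R) _ (Sum.elim (fun _ => 1) fun _ => 0) ?_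
  · simp [Fintype.sum_sum_type]
  rintro (i | i) (j | j) <;>
    simp only [fromBlocks_apply₁₁, fromBlocks_apply₁₂, fromBlocks_apply₂₁, fromBlocks_apply₂₂,
      Sum.elim_inl, Sum.elim_inr, mem_degreeLE, map_apply, Matrix.neg_apply, Matrix.smul_apply,
      smul_eq_mul]
  · rw [one_apply]; split_ifs <;> compute_degree!
  all_goals compute_degree!

theorem degree_det_X_smul_add_C {A : Matrix n n R} (hA : A.det ≠ 0) (B : Matrix n n R) :
    (det ((X : R[X]) • A.map C + B.map C)).degree = Fintype.card n :=
  degree_eq_of_le_of_coeff_ne_zero (degree_le_of_natDegree_le (natDegree_det_X_add_C_le A B))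
    (by rwa [coeff_det_X_add_C_card])

theorem eval_det_X_smul_add_C (A B : Matrix n n R) (r : R) :
    (det ((X : R[X]) • A.map C + B.map C)).eval r = det (r • A + B) := by
  rw [← coe_evalRingHom, RingHom.map_det]
  congr 1
  ext i j
  simp only [RingHom.mapMatrix_apply, map_apply, Matrix.add_apply, Matrix.smul_apply, smul_eq_mul,
    coe_evalRingHom, eval_add, eval_mul, eval_X, eval_C]

end Polynomial

namespace Matrix

variable {R n m : Type*} [CommRing R] [Fintype n] [DecidableEq n]

/-- `det (k • K₁ + K₀ + w • G)` as a polynomial in `w` (outer variable) over `R[k]`. -/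
noncomputable def pencilDet (K₁ K₀ G : Matrix n n R) : R[X][X] :=
  det ((X : R[X][X]) • (G.map C).map C + ((X : R[X]) • K₁.map C + K₀.map C).map C)

variable (K₁ K₀ G : Matrix n n R)

theorem pencilDet_mem_totalDegreeLE : pencilDet K₁ K₀ G ∈ totalDegreeLE R (Fintype.card n) := by
  have h := det_mem_graded (totalDegreeLE R)
    ((X : R[X][X]) • (G.map C).map C + ((X : R[X]) • K₁.map C + K₀.map C).map C) (fun _ => 1)
    fun i j => by
      simp only [Matrix.add_apply, Matrix.smul_apply, Matrix.map_apply, smul_eq_mul]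
      exact X_mul_C_C_add_C_mem_totalDegreeLE (by compute_degree) (G i j)
  rwa [sum_const, card_univ, smul_eq_mul, mul_one] at h

theorem coeff_zero_pencilDet :
    (pencilDet K₁ K₀ G).coeff 0 = det ((X : R[X]) • K₁.map C + K₀.map C) :=
  coeff_det_X_add_C_zero _ _

theorem natDegree_pencilDet_le [Fintype m] [DecidableEq m] (U : Matrix n m R) (V : Matrix m n R) :
    (pencilDet K₁ K₀ (U * V)).natDegree ≤ Fintype.card m := by
  refine natDegree_le_of_degree_le ?_
  rw [pencilDet, Matrix.map_mul]
  exact degree_det_X_smul_mul_add_C_le _ _ _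

theorem eval_map_pencilDet (k w : R) :
    ((pencilDet K₁ K₀ G).map (evalRingHom k)).eval w = det (k • K₁ + K₀ + w • G) := by
  rw [pencilDet, ← coe_mapRingHom, RingHom.map_det, ← coe_evalRingHom, RingHom.map_det]
  congr 1
  ext i j
  simp only [RingHom.mapMatrix_apply, map_apply, Matrix.add_apply, Matrix.smul_apply, smul_eq_mul,
    coe_mapRingHom, coe_evalRingHom, Polynomial.map_add, Polynomial.map_mul, map_C, map_X, eval_add,
    eval_mul, eval_C, eval_X]
  ring

end Matrix

theorem Complex.coth_add_one_eq_exp_mul {u : ℂ} (hu : Complex.sinh u ≠ 0) :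
    Complex.cosh u / Complex.sinh u + 1
      = Complex.exp (2 * u) * (Complex.cosh u / Complex.sinh u - 1) := by
  field_simp
  rw [Complex.cosh_add_sinh, Complex.cosh_sub_sinh, ← Complex.exp_add]
  ring_nf

/-- The trigonometric spin Calogero–Moser Lax matrix is `L(z) = A - (coth z) • F` with this `A`. -/
noncomputable def trigLaxConst {n : Type*} [DecidableEq n] (x p : n → ℂ) (F : Matrix n n ℂ) :
    Matrix n n ℂ :=
  of fun i j => if i = j then p i else F i j * (Complex.cosh (x i - x j) / Complex.sinh (x i - x j))

theorem diagonal_add_trigLaxConst_add_mul_diagonal_exp {n : Type*} [Fintype n] [DecidableEq n]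
    {x : n → ℂ} (hx : ∀ i j, i ≠ j → Complex.sinh (x i - x j) ≠ 0) (p : n → ℂ) {F : Matrix n n ℂ}
    (hF : ∀ i, F i i = 2) (k : ℂ) :
    (diagonal (fun _ => 2 * k) + trigLaxConst x p F + F) * diagonal (fun i => Complex.exp (2 * x i))
      = diagonal (fun i => Complex.exp (2 * x i))
          * (diagonal (fun _ => 2 * (k + 2)) + trigLaxConst x p F - F) := by
  ext i j
  rw [mul_diagonal, diagonal_mul]
  by_cases hij : i = j
  · subst hij
    simp only [trigLaxConst, Matrix.add_apply, Matrix.sub_apply, diagonal_apply_eq, of_apply,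
      if_pos, hF]
    ring
  · have hexp : Complex.exp (2 * x i) = Complex.exp (2 * (x i - x j)) * Complex.exp (2 * x j) := by
      rw [← Complex.exp_add]; ring_nf
    simp only [Matrix.add_apply, Matrix.sub_apply, diagonal_apply_ne _ hij, trigLaxConst, of_apply,
      if_neg hij]
    rw [hexp]
    linear_combination
      (F i j * Complex.exp (2 * x j)) * Complex.coth_add_one_eq_exp_mul (hx i j hij)

/-- Proposition 3.2: structure of the trigonometric spectral curve.
Writing `w = coth z`, one has `det(2kI + A − wF) = Σ_{m=0}^{l} wᵐ R_m(k)`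
with `deg R_m ≤ N − m`, `R₀(k) = det(2kI + A)` of degree exactly `N`, and
`det(2kI + A + F) = det(2(k+2)I + A − F)` (the relation
`R(k, z = −∞) = R(k+2, z = +∞)`). -/
theorem trigonometric_spectral_curve (N l : ℕ)
    (x p : Fin N → ℂ) (a b : Fin N → Fin l → ℂ)
    (hx : ∀ i j : Fin N, i ≠ j → Complex.sinh (x i - x j) ≠ 0)
    (hba : ∀ i : Fin N, (∑ α : Fin l, b i α * a i α) = 2) :
    let F : Matrix (Fin N) (Fin N) ℂ := Matrix.of fun i j => ∑ α : Fin l, b i α * a j α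
    let A : Matrix (Fin N) (Fin N) ℂ :=
      Matrix.of fun i j => if i = j then p i else
        F i j * (Complex.cosh (x i - x j) / Complex.sinh (x i - x j))
    (∃ R : Fin (l + 1) → Polynomial ℂ,
        (∀ m : Fin (l + 1), (R m).degree ≤ (N - (m : ℕ) : ℕ)) ∧
        (∀ k : ℂ, (R 0).eval k
          = (Matrix.diagonal (fun _ => 2 * k) + A).det) ∧
        (R 0).degree = N ∧
        (∀ k w : ℂ,
          (Matrix.diagonal (fun _ => 2 * k) + A - w • F).det
            = ∑ m : Fin (l + 1), w ^ (m : ℕ) * (R m).eval k)) ∧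
    (∀ k : ℂ,
      (Matrix.diagonal (fun _ => 2 * k) + A + F).det
        = (Matrix.diagonal (fun _ => 2 * (k + 2)) + A - F).det) := by
  intro F A
  have hA : A = trigLaxConst x p F := rfl
  have hF : F = of b * of fun α j => a j α := by
    ext i j
    simp [F, mul_apply]
  have hdiag (k : ℂ) : diagonal (fun _ => 2 * k) = k • diagonal fun _ : Fin N => (2 : ℂ) := by
    ext i j
    by_cases h : i = j <;> simp [h, mul_comm]
  set P := pencilDet (diagonal fun _ => (2 : ℂ)) A (-of b * of fun α j => a j α)
  have hP : P ∈ totalDegreeLE ℂ N := Fintype.card_fin N ▸ pencilDet_mem_totalDegreeLE _ _ _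
  refine ⟨⟨fun m => P.coeff m, fun m => degree_coeff_le_of_mem_totalDegreeLE hP m, fun k => ?_, ?_,
    fun k w => ?_⟩, fun k => ?_⟩
  · simp only [Fin.val_zero]
    rw [coeff_zero_pencilDet, eval_det_X_smul_add_C, hdiag]
  · simp only [Fin.val_zero]
    rw [coeff_zero_pencilDet, degree_det_X_smul_add_C (by simp [det_diagonal]), Fintype.card_fin]
  · have hdeg : (P.map (evalRingHom k)).natDegree < l + 1 := by
      have := natDegree_pencilDet_le (diagonal fun _ => (2 : ℂ)) A (-of b) (of fun α j => a j α)
      rw [Fintype.card_fin] at this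
      exact Nat.lt_succ_of_le (natDegree_map_le.trans this)
    calc (diagonal (fun _ => 2 * k) + A - w • F).det = (P.map (evalRingHom k)).eval w := by
          rw [eval_map_pencilDet, hdiag, hF, Matrix.neg_mul, smul_neg, sub_eq_add_neg]
      _ = ∑ m ∈ range (l + 1), (P.map (evalRingHom k)).coeff m * w ^ m := eval_eq_sum_range' hdeg w
      _ = _ := by
          rw [← Fin.sum_univ_eq_sum_range]
          simp [coeff_map, mul_comm]
  · have hD : det (diagonal fun i => Complex.exp (2 * x i)) ≠ 0 := by
      simp [det_diagonal, prod_ne_zero_iff, Complex.exp_ne_zero]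
    refine mul_left_cancel₀ hD ?_
    rw [mul_comm, ← det_mul, ← det_mul, hA,
      diagonal_add_trigLaxConst_add_mul_diagonal_exp hx p (F := F) hba k]
end

section
/- Proposition 3.3 (structure of the rational spectral curve): let x₁,…,x_N ∈ ℂ be pairwise distinct, p₁,…,p_N ∈ ℂ, and a_i, b_i ∈ ℂˡ with b_i·a_i = 2. Set F_{ij} = b_i·a_j and define A by A_{ii} = p_i, A_{ij} = F_{ij}/(x_i − x_j) (i ≠ j). Then there exist polynomials R₀, R₁, …, R_l ∈ ℂ[k] with deg R_m ≤ N − m such that for all k, w ∈ ℂ one has det(2k·I + A − w·F) = Σ_{m=0}^{l} wᵐ·R_m(k), with R₀(k) = det(2k·I + A), and moreover R₁ = −dR₀/dk. -/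
/-!
Work in `R[k][w]`. By the commutator identity `[X, A] = F - 2I` (with `X = diag x`), the matrix
`2kI + A - wF` equals `V + w [V, X]` for `V = 2(k - w)I + A`, so it agrees modulo `w²` with the
conjugate `(1 - wX) V (1 + wX)`; as `det (1 - wX) det (1 + wX) ≡ 1`, its determinant is
`R₀(k - w) ≡ R₀(k) - w R₀'(k)` modulo `w²`. The degree bounds come from every entry having total
degree at most one in `(k, w)`, and from `F = B C` with `B` of width `l`, through the Schur
complement `det (M - B (wC)) = det [[M, B], [wC, 1]]`.
-/

open Matrix Finset Polynomial

open scoped Polynomial.Bivariate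

namespace Matrix

variable {n : Type*} [Fintype n] [DecidableEq n] {S : Type*} [CommRing S]

theorem dvd_det_sub_det_of_sub_eq_smul {c : S} {M N P : Matrix n n S} (h : M - N = c • P) :
    c ∣ M.det - N.det := by
  let π := Ideal.Quotient.mk (Ideal.span {c})
  have hMN : π.mapMatrix M = π.mapMatrix N := by
    ext i j
    refine Ideal.Quotient.eq.mpr (Ideal.mem_span_singleton.mpr ?_)
    rw [← sub_apply, h, smul_apply, smul_eq_mul]
    exact dvd_mul_right c _
  rw [← Ideal.mem_span_singleton, ← Ideal.Quotient.eq, RingHom.map_det, RingHom.map_det, hMN]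

theorem sq_dvd_det_add_smul_commutator_sub_det (c : S) (V D : Matrix n n S) :
    c ^ 2 ∣ det (V + c • (V * D - D * V)) - det V := by
  have hconj : V + c • (V * D - D * V) - (1 - c • D) * V * (1 + c • D) = c ^ 2 • (D * V * D) := by
    simp only [sub_mul, mul_add, one_mul, mul_one, smul_mul_assoc, mul_smul_comm, smul_sub,
      smul_smul, ← pow_two]
    abel
  have hunit : (1 - c • D) * (1 + c • D) - 1 = c ^ 2 • -(D * D) := by
    simp only [sub_mul, mul_add, one_mul, mul_one, smul_mul_assoc, mul_smul_comm, smul_sub,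
      smul_smul, ← pow_two, smul_neg]
    abel
  have hsplit : det (V + c • (V * D - D * V)) - det V =
      (det (V + c • (V * D - D * V)) - det ((1 - c • D) * V * (1 + c • D))) +
        det V * (det ((1 - c • D) * (1 + c • D)) - det (1 : Matrix n n S)) := by
    simp only [det_mul, det_one]
    ring
  rw [hsplit]
  exact dvd_add (dvd_det_sub_det_of_sub_eq_smul hconj)
    (dvd_mul_of_dvd_right (dvd_det_sub_det_of_sub_eq_smul hunit) _)

theorem natDegree_det_le_sum (M : Matrix n n S[X]) (d : n → ℕ)
    (h : ∀ i j, (M i j).natDegree ≤ d i) : M.det.natDegree ≤ ∑ i, d i := by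
  rw [det_apply]
  refine natDegree_sum_le_of_forall_le _ _ fun σ _ => ?_
  rw [Units.smul_def, zsmul_eq_mul]
  refine natDegree_mul_le.trans ?_
  rw [natDegree_intCast, zero_add]
  calc (∏ i, M (σ i) i).natDegree ≤ ∑ i, (M (σ i) i).natDegree := natDegree_prod_le _ _
    _ ≤ ∑ i, d (σ i) := sum_le_sum fun i _ => h (σ i) i
    _ = ∑ i, d i := Equiv.sum_comp σ d

theorem diagonal_mul_sub_mul_diagonal_eq_sub_two {A F : Matrix n n S} {x : n → S}
    (hA : ∀ i j, i ≠ j → (x i - x j) * A i j = F i j) (hF : ∀ i, F i i = 2) :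
    diagonal x * A - A * diagonal x = F - 2 := by
  ext i j
  rw [sub_apply, sub_apply, diagonal_mul, mul_diagonal, ofNat_apply]
  by_cases hij : i = j
  · subst hij
    simp [hF, mul_comm]
  · simp only [hij, ← hA i j hij, if_false]
    ring

end Matrix

namespace Polynomial

theorem coeff_eq_of_X_pow_dvd_sub {S : Type*} [CommRing S] {P Q : S[X]} {n d : ℕ}
    (h : X ^ n ∣ P - Q) (hd : d < n) : P.coeff d = Q.coeff d :=
  sub_eq_zero.mp (by rw [← coeff_sub]; exact X_pow_dvd_iff.mp h d hd)

end Polynomial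

namespace Polynomial.Bivariate

variable {R : Type*} [CommRing R]

variable (R) in
def totalDegreeLE (n : ℕ) : Submodule R R[X][Y] where
  carrier := {P | ∀ i j, n < i + j → (P.coeff i).coeff j = 0}
  add_mem' {P Q} hP hQ i j h := by simp [hP i j h, hQ i j h]
  zero_mem' i j _ := by simp
  smul_mem' c P hP i j h := by simp [hP i j h]

theorem C_mem_totalDegreeLE {n : ℕ} {p : R[X]} (hp : p.natDegree ≤ n) :
    C p ∈ totalDegreeLE R n := by
  intro i j h
  rcases i with _ | i
  · rw [coeff_C_zero]
    exact coeff_eq_zero_of_natDegree_lt (by omega)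
  · simp

theorem X_mem_totalDegreeLE_one : (Y : R[X][Y]) ∈ totalDegreeLE R 1 := by
  intro i j h
  rw [coeff_X]
  split_ifs with hi
  · subst hi
    exact coeff_one.trans (if_neg (by omega))
  · rfl

theorem mul_mem_totalDegreeLE {n m : ℕ} {P Q : R[X][Y]} (hP : P ∈ totalDegreeLE R n)
    (hQ : Q ∈ totalDegreeLE R m) : P * Q ∈ totalDegreeLE R (n + m) := by
  intro i j h
  rw [coeff_mul, finsetSum_coeff]
  refine sum_eq_zero fun ab hab => ?_
  rw [coeff_mul]
  refine sum_eq_zero fun cd hcd => ?_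
  rw [HasAntidiagonal.mem_antidiagonal] at hab hcd
  rcases lt_or_ge n (ab.1 + cd.1) with hn | hn
  · rw [hP _ _ hn, zero_mul]
  · rw [hQ _ _ (by omega), mul_zero]

theorem prod_mem_totalDegreeLE {ι : Type*} (s : Finset ι) {f : ι → R[X][Y]} {d : ι → ℕ}
    (h : ∀ i ∈ s, f i ∈ totalDegreeLE R (d i)) :
    ∏ i ∈ s, f i ∈ totalDegreeLE R (∑ i ∈ s, d i) := by
  classical
  induction s using Finset.induction_on with
  | empty => exact C_mem_totalDegreeLE (p := 1) natDegree_one.le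
  | insert a s ha ih =>
    rw [prod_insert ha, sum_insert ha]
    exact mul_mem_totalDegreeLE (h a (mem_insert_self a s))
      (ih fun i hi => h i (mem_insert_of_mem hi))

theorem det_mem_totalDegreeLE {n : Type*} [Fintype n] [DecidableEq n] {M : Matrix n n R[X][Y]}
    (h : ∀ i j, M i j ∈ totalDegreeLE R 1) : M.det ∈ totalDegreeLE R (Fintype.card n) := by
  rw [det_apply]
  refine Submodule.sum_mem _ fun σ _ => ?_
  rw [Units.smul_def]
  refine Submodule.smul_of_tower_mem _ _ ?_
  simpa using prod_mem_totalDegreeLE univ fun i _ => h (σ i) i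

theorem degree_coeff_le_of_mem_totalDegreeLE {n : ℕ} {P : R[X][Y]}
    (hP : P ∈ totalDegreeLE R n) (i : ℕ) : (P.coeff i).degree ≤ (n - i : ℕ) :=
  degree_le_iff_coeff_zero _ _ |>.mpr fun j hj => hP i j (by
    have hj' : n - i < j := by exact_mod_cast hj
    omega)

theorem aeval_C_X (P : R[X]) : aeval (C X : R[X][Y]) P = C P := by
  rw [show (C X : R[X][Y]) = CAlgHom (R := R) X from rfl, aeval_algHom_apply, aeval_X_left_apply]
  rfl

theorem X_sq_dvd_aeval_C_X_sub_X_sub (P : R[X]) :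
    (Y : R[X][Y]) ^ 2 ∣ aeval (C X - Y) P - (C P - Y * C (derivative P)) := by
  let π := Ideal.Quotient.mkₐ R (Ideal.span {(Y : R[X][Y]) ^ 2})
  have hY : π (-(Y : R[X][Y])) ^ 2 = 0 := by
    rw [← map_pow, Ideal.Quotient.mkₐ_eq_mk, Ideal.Quotient.eq_zero_iff_mem]
    exact Ideal.mem_span_singleton.mpr ⟨1, by ring⟩
  rw [← Ideal.mem_span_singleton, ← Ideal.Quotient.eq_zero_iff_mem, ← Ideal.Quotient.mkₐ_eq_mk R]
  change π _ = 0
  rw [map_sub, ← aeval_algHom_apply, sub_eq_add_neg (C X : R[X][Y]), map_add,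
    aeval_add_of_sq_eq_zero P (π (C X)) _ hY, aeval_algHom_apply π, aeval_algHom_apply π,
    aeval_C_X, aeval_C_X]
  simp only [map_sub, map_mul, map_neg]
  ring

variable {n : Type*} [Fintype n] [DecidableEq n]

-- `k` is the inner variable `C X` and `w` the outer variable `Y`.
noncomputable def pencilK (A : Matrix n n R) : Matrix n n R[X] := scalar n (2 * X) + A.map C

noncomputable def pencilKW (A F : Matrix n n R) : Matrix n n R[X][Y] :=
  scalar n (C (2 * X)) + A.map CC - (Y : R[X][Y]) • F.map CC

variable (A F : Matrix n n R)

theorem eval_det_pencilK (k : R) :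
    (pencilK A).det.eval k = (diagonal (fun _ => 2 * k) + A).det := by
  rw [← coe_evalRingHom, RingHom.map_det]
  congr 1
  ext i j : 1
  by_cases hij : i = j <;> simp [pencilK, hij]

theorem evalEval_det_pencilKW (k w : R) :
    (pencilKW A F).det.evalEval k w = (diagonal (fun _ => 2 * k) + A - w • F).det := by
  rw [← coe_evalEvalRingHom, RingHom.map_det]
  congr 1
  ext i j : 1
  by_cases hij : i = j <;> simp [pencilKW, hij, mul_comm w]

theorem pencilKW_eq_add_smul_commutator {Xm : Matrix n n R} (h : Xm * A - A * Xm = F - 2) :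
    pencilKW A F = (pencilK A).map (aeval (C X - Y)) + (Y : R[X][Y]) •
      ((pencilK A).map (aeval (C X - Y)) * Xm.map (algebraMap R R[X][Y]) -
        Xm.map (algebraMap R R[X][Y]) * (pencilK A).map (aeval (C X - Y))) := by
  set V := (pencilK A).map (aeval (C X - Y : R[X][Y]))
  set Xm' := Xm.map (algebraMap R R[X][Y])
  let ι := algebraMap R R[X][Y]
  have hV : V = scalar n (2 * (C X - Y)) + A.map ι := by
    ext i j : 1
    by_cases hij : i = j <;>
      simp [V, pencilK, hij, ι, map_ofNat (aeval (C X - Y : R[X][Y])) 2]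
  have hcomm : V * Xm' - Xm' * V = -(F.map ι - 2) := by
    have hmap : Xm' * A.map ι - A.map ι * Xm' = F.map ι - 2 := by
      simpa only [map_sub, map_mul, map_ofNat, RingHom.mapMatrix_apply] using
        congrArg ι.mapMatrix h
    rw [hV, ← hmap, add_mul, mul_add, (scalar_commute _ (Commute.all _) Xm').eq]
    abel
  rw [hcomm, hV]
  ext i j : 1
  by_cases hij : i = j <;> simp [pencilKW, hij, ι, ofNat_apply, map_ofNat C 2] <;> ring

theorem natDegree_det_pencilKW_mul_le {m : Type*} [Fintype m] [DecidableEq m]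
    (B : Matrix n m R) (G : Matrix m n R) :
    (pencilKW A (B * G)).det.natDegree ≤ Fintype.card m := by
  have hblock : pencilKW A (B * G) =
      (scalar n (C (2 * X)) + A.map CC) - B.map CC * ((Y : R[X][Y]) • G.map CC) := by
    ext i j : 1
    simp [pencilKW, mul_apply, Finset.mul_sum, mul_comm]
  rw [hblock, ← det_fromBlocks_one₂₂]
  refine (natDegree_det_le_sum _ (Sum.elim 0 1) ?_).trans (by simp [Fintype.sum_sum_type])
  rintro (i | i) (j | j)
  · by_cases hij : i = j <;> simp [hij]
    exact natDegree_eq_zero.mpr ⟨2 * X, by rw [map_mul, map_ofNat]⟩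
  · simp
  · simpa using (natDegree_C_mul_le _ _).trans natDegree_X_le
  · simp only [fromBlocks_apply₂₂, one_apply]
    split_ifs <;> simp

theorem det_pencilKW_mem_totalDegreeLE :
    (pencilKW A F).det ∈ totalDegreeLE R (Fintype.card n) := by
  refine det_mem_totalDegreeLE fun i j => ?_
  have hdiag : scalar n (C (2 * X) : R[X][Y]) i j ∈ totalDegreeLE R 1 := by
    rw [scalar_apply, diagonal_apply]
    split_ifs
    · exact C_mem_totalDegreeLE (by compute_degree)
    · exact zero_mem _
  simp only [pencilKW, Matrix.add_apply, Matrix.sub_apply, Matrix.smul_apply, map_apply,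
    smul_eq_mul]
  exact sub_mem (add_mem hdiag (C_mem_totalDegreeLE ((natDegree_C _).trans_le zero_le_one)))
    (mul_mem_totalDegreeLE X_mem_totalDegreeLE_one (C_mem_totalDegreeLE (natDegree_C _).le))

theorem X_sq_dvd_det_pencilKW_sub {Xm : Matrix n n R} (h : Xm * A - A * Xm = F - 2) :
    (Y : R[X][Y]) ^ 2 ∣
      (pencilKW A F).det - (C (pencilK A).det - Y * C (derivative (pencilK A).det)) := by
  have hdet : aeval (C X - Y : R[X][Y]) (pencilK A).det =
      ((pencilK A).map (aeval (C X - Y : R[X][Y]))).det :=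
    AlgHom.map_det _ _
  rw [← sub_add_sub_cancel _ (aeval (C X - Y : R[X][Y]) (pencilK A).det), hdet,
    pencilKW_eq_add_smul_commutator A F h]
  exact dvd_add (sq_dvd_det_add_smul_commutator_sub_det _ _ _)
    (hdet ▸ X_sq_dvd_aeval_C_X_sub_X_sub _)

theorem evalEval_eq_sum_range {P : R[X][Y]} {m : ℕ} (hP : P.natDegree < m) (x y : R) :
    P.evalEval x y = ∑ i ∈ range m, y ^ i * (P.coeff i).eval x := by
  rw [evalEval, eval_eq_sum_range' hP, eval_finsetSum]
  simp only [eval_mul, eval_pow, eval_C, mul_comm]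

end Polynomial.Bivariate

open Polynomial.Bivariate in
/-- Proposition 3.3: structure of the rational spectral curve.
Writing `w = 1/z`, one has `det(2kI + A − wF) = Σ_{m=0}^{l} wᵐ R_m(k)` with
`deg R_m ≤ N − m`, `R₀(k) = det(2kI + A)`, and `R₁ = −dR₀/dk`. -/
theorem rational_spectral_curve (N l : ℕ) (hl : 1 ≤ l)
    (x p : Fin N → ℂ) (a b : Fin N → Fin l → ℂ)
    (hx : ∀ i j : Fin N, i ≠ j → x i ≠ x j)
    (hba : ∀ i : Fin N, (∑ α : Fin l, b i α * a i α) = 2) :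
    let F : Matrix (Fin N) (Fin N) ℂ := Matrix.of fun i j => ∑ α : Fin l, b i α * a j α
    let A : Matrix (Fin N) (Fin N) ℂ :=
      Matrix.of fun i j => if i = j then p i else F i j / (x i - x j)
    ∃ R : Fin (l + 1) → Polynomial ℂ,
      (∀ m : Fin (l + 1), (R m).degree ≤ (N - (m : ℕ) : ℕ)) ∧
      (∀ k : ℂ, (R 0).eval k = (Matrix.diagonal (fun _ => 2 * k) + A).det) ∧
      (∀ k w : ℂ,
        (Matrix.diagonal (fun _ => 2 * k) + A - w • F).det
          = ∑ m : Fin (l + 1), w ^ (m : ℕ) * (R m).eval k) ∧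
      R ⟨1, by omega⟩ = -Polynomial.derivative (R 0) := by
  intro F A
  have hF : F = of b * (of a)ᵀ := by
    ext i j
    simp [F, mul_apply]
  have hA : ∀ i j, i ≠ j → (x i - x j) * A i j = F i j := fun i j hij => by
    simp [A, hij, mul_div_cancel₀ _ (sub_ne_zero.mpr (hx i j hij))]
  have hcomm : diagonal x * A - A * diagonal x = F - 2 :=
    diagonal_mul_sub_mul_diagonal_eq_sub_two hA hba
  set D := (pencilKW A F).det
  have hcong := X_sq_dvd_det_pencilKW_sub A F hcomm
  have hD0 : D.coeff 0 = (pencilK A).det := by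
    simpa using coeff_eq_of_X_pow_dvd_sub hcong two_pos
  have hD1 : D.coeff 1 = -derivative (pencilK A).det := by
    simpa [coeff_C] using coeff_eq_of_X_pow_dvd_sub hcong one_lt_two
  have hdeg : D.natDegree < l + 1 := by
    simpa [D, hF] using Nat.lt_succ_of_le (natDegree_det_pencilKW_mul_le A (of b) (of a)ᵀ)
  refine ⟨fun m => D.coeff m, fun m => ?_, fun k => ?_, fun k w => ?_, ?_⟩
  · simpa using degree_coeff_le_of_mem_totalDegreeLE (det_pencilKW_mem_totalDegreeLE A F) m
  · simp [hD0, eval_det_pencilK]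
  · rw [← evalEval_det_pencilKW, evalEval_eq_sum_range hdeg, ← Fin.sum_univ_eq_sum_range]
  · simp [hD0, hD1]
end

section
/- Lax form of the equations of motion in the rational case: let x_i : ℝ → ℂ be twice differentiable with x_i(t) ≠ x_j(t) for all t and i ≠ j, let a_i, b_i : ℝ → ℂˡ be differentiable, λ_i : ℝ → ℂ, and set f_{ij}(t) = b_i(t)·a_j(t). Assume that for all t: (i) b_i·a_i = 2; (ii) ẍ_i = −2·Σ_{j≠i} f_{ij}f_{ji}/(x_i−x_j)³; (iii) ȧ_i = −Σ_{j≠i} a_j·f_{ji}/(x_i−x_j)² − λ_i a_i; (iv) ḃ_i = Σ_{j≠i} b_j·f_{ij}/(x_i−x_j)² + λ_i b_i. Then for every z ∈ ℂ with z ≠ 0, the matrices L(t) with entries L_{ii} = ẋ_i − 2/z, L_{ij} = f_{ij}(1/(x_i−x_j) − 1/z) (i ≠ j), and M(t) with entries M_{ii} = −λ_i, M_{ij} = −f_{ij}/(x_i−x_j)² (i ≠ j), satisfy dL/dt = L·M − M·L. -/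
/-!
Write `f_pq = b_p · a_q` and `φ(u) = 1/u - 1/z`. The spin equations give
`ḟ_pq = Σ_{k≠p} f_pk f_kq / (x_p - x_k)² - Σ_{k≠q} f_pk f_kq / (x_q - x_k)² + (λ_p - λ_q) f_pq`,
and `[L, M]` is compared with `dL/dt` entrywise. On the diagonal both sides are the equation of
motion. Off the diagonal, the summands `k ≠ i, j` of `[L, M]_ij` match those of `ḟ_ij φ(x_i - x_j)`
by the functional equation `φ(v)/u² - φ(u)/v² = (1/u² - 1/v²) φ(u + v)`; the summands `k = i, j`
supply the `ẋ`- and `λ`-terms of `d/dt (f_ij φ(x_i - x_j))`, up to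
`f_ij (f_jj - f_ii) φ(x_i - x_j) / (x_i - x_j)²`, which vanishes since `f_ii = f_jj = 2`.
-/

open Finset Matrix

theorem HasDerivAt.dotProduct {𝕜 𝔸 σ : Type*} [NontriviallyNormedField 𝕜] [NormedCommRing 𝔸]
    [NormedAlgebra 𝕜 𝔸] [Fintype σ] {u v : 𝕜 → σ → 𝔸} {u' v' : σ → 𝔸} {t : 𝕜}
    (hu : HasDerivAt u u' t) (hv : HasDerivAt v v' t) :
    HasDerivAt (fun s => u s ⬝ᵥ v s) (u' ⬝ᵥ v t + u t ⬝ᵥ v') t :=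
  (HasDerivAt.fun_sum fun α _ =>
    (hasDerivAt_pi.mp hu α).fun_mul (hasDerivAt_pi.mp hv α)).congr_deriv sum_add_distrib

namespace SpinCalogeroMoser

variable {ι σ K : Type*} [Fintype ι] [DecidableEq ι] [Fintype σ] [Field K]

theorem hasDerivAt_coupling {x lam : ι → ℝ → ℂ} {a b : ι → ℝ → σ → ℂ} {t : ℝ} {p q : ι}
    (hb : HasDerivAt (b p) ((∑ k ∈ univ.erase p,
      ((b p t ⬝ᵥ a k t) / (x p t - x k t) ^ 2) • b k t) + lam p t • b p t) t)
    (ha : HasDerivAt (a q) (-(∑ k ∈ univ.erase q,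
      ((b k t ⬝ᵥ a q t) / (x q t - x k t) ^ 2) • a k t) - lam q t • a q t) t) :
    HasDerivAt (fun s => b p s ⬝ᵥ a q s)
      (∑ k ∈ univ.erase p, (b p t ⬝ᵥ a k t) * (b k t ⬝ᵥ a q t) / (x p t - x k t) ^ 2
        - ∑ k ∈ univ.erase q, (b p t ⬝ᵥ a k t) * (b k t ⬝ᵥ a q t) / (x q t - x k t) ^ 2
        + (lam p t - lam q t) * (b p t ⬝ᵥ a q t)) t := by
  have reorder (k : ι) : (b k t ⬝ᵥ a q t) * (b p t ⬝ᵥ a k t) / (x q t - x k t) ^ 2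
      = (b p t ⬝ᵥ a k t) * (b k t ⬝ᵥ a q t) / (x q t - x k t) ^ 2 := by ring
  refine (hb.dotProduct ha).congr_deriv ?_
  simp only [add_dotProduct, sum_dotProduct, smul_dotProduct, dotProduct_sub, dotProduct_neg,
    dotProduct_sum, dotProduct_smul, smul_eq_mul, ← mul_div_right_comm, reorder]
  ring

/-- `L` at one instant, from positions `X`, velocities `V` and couplings `F = (f_ij)`. -/
def laxL (z : K) (X V : ι → K) (F : ι → ι → K) : Matrix ι ι K :=
  of fun i j => if i = j then V i - 2 / z else F i j * (1 / (X i - X j) - 1 / z)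

def laxM (X Λ : ι → K) (F : ι → ι → K) : Matrix ι ι K :=
  of fun i j => if i = j then -Λ i else -F i j / (X i - X j) ^ 2

theorem lax_function_identity (u v z : K) (hu : u ≠ 0) (hv : v ≠ 0) (huv : u + v ≠ 0) :
    (1 / v - 1 / z) / u ^ 2 - (1 / u - 1 / z) / v ^ 2
      = (1 / u ^ 2 - 1 / v ^ 2) * (1 / (u + v) - 1 / z) := by
  field_simp
  ring

theorem laxL_commutator_apply_self (z : K) (X V Λ : ι → K) (F : ι → ι → K) (i : ι) :
    (laxL z X V F * laxM X Λ F - laxM X Λ F * laxL z X V F) i i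
      = -2 * ∑ j ∈ univ.erase i, F i j * F j i / (X i - X j) ^ 3 := by
  rw [Matrix.sub_apply, mul_apply, mul_apply, ← sum_sub_distrib, ← add_sum_erase _ _ (mem_univ i),
    mul_comm (laxM X Λ F i i), sub_self, zero_add, mul_sum]
  refine sum_congr rfl fun j hj => ?_
  have hji : j ≠ i := ne_of_mem_erase hj
  simp only [laxL, laxM, of_apply, if_neg hji, if_neg hji.symm]
  rw [← neg_sub (X i) (X j)]
  generalize X i - X j = u
  ring

theorem laxL_commutator_apply_of_ne (z : K) {X : ι → K} (hX : Function.Injective X)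
    (V Λ : ι → K) {F : ι → ι → K} {i j : ι} (hij : i ≠ j) (hF : F i i = F j j) :
    (laxL z X V F * laxM X Λ F - laxM X Λ F * laxL z X V F) i j
      = (∑ k ∈ univ.erase i, F i k * F k j / (X i - X k) ^ 2
          - ∑ k ∈ univ.erase j, F i k * F k j / (X j - X k) ^ 2
          + (Λ i - Λ j) * F i j) * (1 / (X i - X j) - 1 / z)
        + F i j * (-(V i - V j) / (X i - X j) ^ 2) := by
  have hj : j ∈ univ.erase i := mem_erase.mpr ⟨hij.symm, mem_univ j⟩
  have hi : i ∈ univ.erase j := mem_erase.mpr ⟨hij, mem_univ i⟩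
  set rest := (univ.erase i).erase j
  have hrest : (univ.erase j).erase i = rest := erase_right_comm
  rw [Matrix.sub_apply, mul_apply, mul_apply, ← sum_sub_distrib, ← add_sum_erase _ _ (mem_univ i),
    ← add_sum_erase _ _ hj, ← add_sum_erase _ _ hj, ← add_sum_erase _ _ hi, hrest]
  have hk : ∑ k ∈ rest, (laxL z X V F i k * laxM X Λ F k j - laxM X Λ F i k * laxL z X V F k j)
      = ∑ k ∈ rest, (F i k * F k j / (X i - X k) ^ 2 - F i k * F k j / (X j - X k) ^ 2)
          * (1 / (X i - X j) - 1 / z) := by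
    refine sum_congr rfl fun k hk => ?_
    have hkj : k ≠ j := ne_of_mem_erase hk
    have hki : k ≠ i := ne_of_mem_erase (mem_of_mem_erase hk)
    simp only [laxL, laxM, of_apply, if_neg hki.symm, if_neg hkj]
    have key := lax_function_identity (X i - X k) (X k - X j) z
      (sub_ne_zero.mpr (hX.ne hki.symm)) (sub_ne_zero.mpr (hX.ne hkj))
      (by rw [sub_add_sub_cancel]; exact sub_ne_zero.mpr (hX.ne hij))
    rw [sub_add_sub_cancel, ← neg_sub (X j) (X k), neg_sq] at key
    linear_combination F i k * F k j * key
  rw [hk, ← sum_mul, sum_sub_distrib]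
  simp only [laxL, laxM, of_apply, if_pos, if_neg hij, hF]
  rw [← neg_sub (X i) (X j), neg_sq]
  ring

end SpinCalogeroMoser

open SpinCalogeroMoser

/-- Lax form `dL/dt = [L,M]` of the equations of motion of the rational spin
Calogero–Moser system. -/
theorem rational_lax_form (N l : ℕ)
    (x x' : Fin N → ℝ → ℂ) (a b : Fin N → ℝ → Fin l → ℂ) (lam : Fin N → ℝ → ℂ)
    (hxne : ∀ (t : ℝ) (i j : Fin N), i ≠ j → x i t ≠ x j t)
    (hx : ∀ (i : Fin N) (t : ℝ), HasDerivAt (x i) (x' i t) t)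
    (hba : ∀ (i : Fin N) (t : ℝ), (∑ α : Fin l, b i t α * a i t α) = 2)
    (hacc : ∀ (i : Fin N) (t : ℝ), HasDerivAt (x' i)
      (-2 * ∑ j ∈ Finset.univ.erase i,
        (∑ α : Fin l, b i t α * a j t α) * (∑ α : Fin l, b j t α * a i t α)
          / (x i t - x j t) ^ 3) t)
    (ha : ∀ (i : Fin N) (t : ℝ), HasDerivAt (a i)
      (-(∑ j ∈ Finset.univ.erase i,
          ((∑ α : Fin l, b j t α * a i t α) / (x i t - x j t) ^ 2) • a j t)
        - lam i t • a i t) t)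
    (hb : ∀ (i : Fin N) (t : ℝ), HasDerivAt (b i)
      ((∑ j ∈ Finset.univ.erase i,
          ((∑ α : Fin l, b i t α * a j t α) / (x i t - x j t) ^ 2) • b j t)
        + lam i t • b i t) t) :
    ∀ z : ℂ, z ≠ 0 →
      let f : Fin N → Fin N → ℝ → ℂ := fun i j t => ∑ α : Fin l, b i t α * a j t α
      let L : ℝ → Matrix (Fin N) (Fin N) ℂ := fun t => Matrix.of fun i j =>
        if i = j then x' i t - 2 / z
        else f i j t * (1 / (x i t - x j t) - 1 / z)
      let M : ℝ → Matrix (Fin N) (Fin N) ℂ := fun t => Matrix.of fun i j =>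
        if i = j then -lam i t else -f i j t / (x i t - x j t) ^ 2
      ∀ (t : ℝ) (i j : Fin N),
        HasDerivAt (fun s => L s i j) ((L t * M t - M t * L t) i j) t := by
  intro z _ f L M t i j
  have hX : Function.Injective fun k => x k t := fun p q h =>
    by_contra fun hpq => hxne t p q hpq h
  by_cases hij : i = j
  · subst hij
    rw [show (fun s => L s i i) = fun s => x' i s - 2 / z from funext fun s => if_pos rfl]
    exact ((hacc i t).sub_const (2 / z)).congr_deriv
      (laxL_commutator_apply_self z (fun k => x k t) (fun k => x' k t) (fun k => lam k t)
        (fun p q => f p q t) i).symm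
  · have hφ : HasDerivAt (fun s => 1 / (x i s - x j s) - 1 / z)
        (-(x' i t - x' j t) / (x i t - x j t) ^ 2) t := by
      simpa only [one_div] using
        (((hx i t).fun_sub (hx j t)).fun_inv (sub_ne_zero.mpr (hX.ne hij))).sub_const z⁻¹
    rw [show (fun s => L s i j) = fun s => f i j s * (1 / (x i s - x j s) - 1 / z)
      from funext fun s => if_neg hij]
    exact ((hasDerivAt_coupling (hb i t) (ha j t)).mul hφ).congr_deriv
      (laxL_commutator_apply_of_ne z hX (fun k => x' k t) (fun k => lam k t)
        (F := fun p q => f p q t) hij ((hba i t).trans (hba j t).symm)).symm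
end

section
/- Forward direction of Theorem 2.1 in the rational case: let z, k ∈ ℂ with z ≠ 0; let x_i : ℝ → ℂ be differentiable with x_i(t) ≠ x_j(t) for i ≠ j; let a_i, b_i : ℝ → ℂˡ and c_i : ℝ → ℂ be differentiable; let λ_i : ℝ → ℂ; set f_{ij} = b_i·a_j. Assume for all t: (i) b_i·a_i = 2; (ii) (ẋ_i − 2/z + 2k)c_i + Σ_{j≠i} f_{ij}(1/(x_i−x_j) − 1/z)c_j = 0; (iii) ċ_i = λ_i c_i + Σ_{j≠i} f_{ij} c_j/(x_i−x_j)²; (iv) ȧ_i = −λ_i a_i − Σ_{j≠i} a_j f_{ji}/(x_i−x_j)²; (v) ḃ_i = λ_i b_i + Σ_{j≠i} b_j f_{ij}/(x_i−x_j)². Then the ℂˡ-valued function Ψ(x,t) = Σ_{i=1}^N c_i(t)·a_i(t)·(1/(x−x_i(t)) − 1/z)·e^{kx+k²t} satisfies the matrix Schrödinger equation ∂_t Ψ(x,t) − ∂²_x Ψ(x,t) + Σ_{i=1}^N a_i(t)·(b_i(t)·Ψ(x,t))/(x−x_i(t))² = 0 at every (x,t) with x ≠ x_i(t) for all i. -/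
/-! Differentiating the ansatz term by term writes `∂ₜΨ − ∂ₓ²Ψ + Σᵢ aᵢ (bᵢ·Ψ)/(x − xᵢ)²` as a
combination `Σᵢ μᵢ aᵢ`: the `ȧⱼ`-terms given by (iv) contribute to `μᵢ` after exchanging the double
sum, and `bᵢ·aᵢ = 2` isolates the diagonal part of `bᵢ·Ψ`. Inserting (iii), the off-diagonal
contributions to `μᵢ` combine through the three-term identity of `Φ(u) = 1/u − 1/z`, leaving
`μᵢ = e^{kx+k²t} (x − xᵢ)⁻² ((L + 2k)C)ᵢ`, which vanishes by (ii). -/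

open Finset Filter Topology Complex

theorem hasDerivAt_ansatz_term_time {F : Type*} [NormedAddCommGroup F] [NormedSpace ℂ F]
    {c X : ℝ → ℂ} {a : ℝ → F} {c' X' : ℂ} {a' : F} {t : ℝ} {x : ℂ} (z k : ℂ)
    (hc : HasDerivAt c c' t) (hX : HasDerivAt X X' t) (ha : HasDerivAt a a' t) (hx : x ≠ X t) :
    HasDerivAt (fun s : ℝ => (c s * (1 / (x - X s) - 1 / z) * cexp (k * x + k ^ 2 * s)) • a s)
      ((c t * (1 / (x - X t) - 1 / z) * cexp (k * x + k ^ 2 * t)) • a'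
        + ((c' * (1 / (x - X t) - 1 / z) + c t * (X' / (x - X t) ^ 2)
          + c t * (1 / (x - X t) - 1 / z) * k ^ 2) * cexp (k * x + k ^ 2 * t)) • a t) t := by
  have hΦ : HasDerivAt (fun s => 1 / (x - X s) - 1 / z) (X' / (x - X t) ^ 2) t :=
    (((hasDerivAt_const t 1).fun_div (hX.const_sub x) (sub_ne_zero.2 hx)).sub_const _).congr_deriv
      (by ring)
  have hE : HasDerivAt (fun s : ℝ => cexp (k * x + k ^ 2 * s))
      (cexp (k * x + k ^ 2 * t) * k ^ 2) t :=
    ((((hasDerivAt_id t).ofReal_comp.const_mul (k ^ 2)).const_add (k * x)).cexp).congr_deriv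
      (by simp)
  exact (((hc.fun_mul hΦ).fun_mul hE).fun_smul ha).congr_deriv (by module)

theorem hasDerivAt_pole_mul_exp {y p : ℂ} (C z k μ : ℂ) (hy : y ≠ p) :
    HasDerivAt (fun y => C * (1 / (y - p) - 1 / z) * cexp (k * y + μ))
      (C * (-1 / (y - p) ^ 2 + k * (1 / (y - p) - 1 / z)) * cexp (k * y + μ)) y := by
  have hΦ := ((hasDerivAt_const y (1 : ℂ)).fun_div ((hasDerivAt_id' y).sub_const p)
    (sub_ne_zero.2 hy)).sub_const (1 / z)
  have hE := (((hasDerivAt_id' y).const_mul k).add_const μ).cexp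
  exact ((hΦ.const_mul C).fun_mul hE).congr_deriv (by ring)

theorem hasDerivAt_pole_mul_exp_deriv {y p : ℂ} (C z k μ : ℂ) (hy : y ≠ p) :
    HasDerivAt (fun y => C * (-1 / (y - p) ^ 2 + k * (1 / (y - p) - 1 / z)) * cexp (k * y + μ))
      (C * (2 / (y - p) ^ 3 - 2 * k / (y - p) ^ 2 + k ^ 2 * (1 / (y - p) - 1 / z))
        * cexp (k * y + μ)) y := by
  have hd := sub_ne_zero.2 hy
  have hV := (hasDerivAt_const y (-1 : ℂ)).fun_div
    (((hasDerivAt_id' y).sub_const p).fun_pow 2) (pow_ne_zero 2 hd)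
  have hΦ := ((hasDerivAt_const y (1 : ℂ)).fun_div ((hasDerivAt_id' y).sub_const p) hd).sub_const
    (1 / z)
  have hE := (((hasDerivAt_id' y).const_mul k).add_const μ).cexp
  refine (((hV.fun_add (hΦ.const_mul k)).const_mul C).fun_mul hE).congr_deriv ?_
  field_simp
  ring

theorem deriv_deriv_sum_smul {𝕜 F ι : Type*} [NontriviallyNormedField 𝕜] [NormedAddCommGroup F]
    [NormedSpace 𝕜 F] (s : Finset ι) {f f' : ι → 𝕜 → 𝕜} {f'' : ι → 𝕜} (v : ι → F) {x : 𝕜}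
    (hf : ∀ i ∈ s, ∀ᶠ y in 𝓝 x, HasDerivAt (f i) (f' i y) y)
    (hf' : ∀ i ∈ s, HasDerivAt (f' i) (f'' i) x) :
    deriv (fun y => deriv (fun y' => ∑ i ∈ s, f i y' • v i) y) x = ∑ i ∈ s, f'' i • v i := by
  have hfirst : (fun y => deriv (fun y' => ∑ i ∈ s, f i y' • v i) y)
      =ᶠ[𝓝 x] fun y => ∑ i ∈ s, f' i y • v i := by
    filter_upwards [(eventually_all_finset s).2 hf] with y hy
    exact (HasDerivAt.fun_sum fun i hi => (hy i hi).smul_const (v i)).deriv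
  rw [hfirst.deriv_eq]
  exact (HasDerivAt.fun_sum fun i hi => (hf' i hi).smul_const (v i)).deriv

theorem sum_smul_sum_erase_smul {ι R M : Type*} [Fintype ι] [DecidableEq ι] [CommSemiring R]
    [AddCommMonoid M] [Module R M] (w : ι → R) (g : ι → ι → R) (v : ι → M) :
    ∑ i, w i • ∑ j ∈ univ.erase i, g i j • v j
      = ∑ i, (∑ j ∈ univ.erase i, w j * g j i) • v i := by
  simp only [smul_sum, smul_smul, sum_smul]
  exact sum_comm' fun i j => by simp [ne_comm]

theorem pole_three_term_identity {K : Type*} [Field K] {x p q : K} (hxp : x ≠ p) (hxq : x ≠ q)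
    (hpq : p ≠ q) (w : K) :
    ((1 / (x - p) - w) - (1 / (x - q) - w)) / (p - q) ^ 2 + (1 / (x - q) - w) / (x - p) ^ 2
      = (1 / (p - q) - w) / (x - p) ^ 2 := by
  have := sub_ne_zero.2 hxp
  have := sub_ne_zero.2 hxq
  have := sub_ne_zero.2 hpq
  field_simp
  ring

theorem sum_pole_coupling_eq {K ι : Type*} [Field K] (s : Finset ι) {x p : K} {q : ι → K}
    (hxp : x ≠ p) (hxq : ∀ j ∈ s, x ≠ q j) (hpq : ∀ j ∈ s, p ≠ q j) (f c : ι → K) (z E : K) :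
    (∑ j ∈ s, f j * c j / (p - q j) ^ 2) * (1 / (x - p) - 1 / z) * E
      - ∑ j ∈ s, c j * (1 / (x - q j) - 1 / z) * E * (f j / (q j - p) ^ 2)
      + (∑ j ∈ s, c j * (1 / (x - q j) - 1 / z) * E * f j) / (x - p) ^ 2
    = E / (x - p) ^ 2 * ∑ j ∈ s, f j * (1 / (p - q j) - 1 / z) * c j := by
  rw [sum_mul, sum_mul, sum_div, mul_sum, ← sum_sub_distrib, ← sum_add_distrib]
  refine sum_congr rfl fun j hj => ?_
  linear_combination f j * c j * E * pole_three_term_identity hxp (hxq j hj) (hpq j hj) (1 / z)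

/-- The left side is `∂ₜΨ − ∂ₓ²Ψ + Σᵢ aᵢ (bᵢ·Ψ)/(x − xᵢ)²` at one time, with `c'`, `a'`, `x'`
standing for `ċ`, `ȧ`, `ẋ` and `E` for `e^{kx+k²t}`. -/
theorem ansatz_residual_eq {K ι m : Type*} [Field K] [Fintype ι] [DecidableEq ι] [Fintype m]
    {X x' c c' lam : ι → K} {a a' b : ι → m → K} {x z k E : K}
    (hx : ∀ i, x ≠ X i) (hX : Pairwise fun i j => X i ≠ X j) (hba : ∀ i, b i ⬝ᵥ a i = 2)
    (hc' : ∀ i, c' i = lam i * c i + ∑ j ∈ univ.erase i, b i ⬝ᵥ a j * c j / (X i - X j) ^ 2)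
    (ha' : ∀ i, a' i = -lam i • a i - ∑ j ∈ univ.erase i, (b j ⬝ᵥ a i / (X i - X j) ^ 2) • a j) :
    ∑ i, ((c i * (1 / (x - X i) - 1 / z) * E) • a' i
        + ((c' i * (1 / (x - X i) - 1 / z) + c i * (x' i / (x - X i) ^ 2)
          + c i * (1 / (x - X i) - 1 / z) * k ^ 2) * E) • a i)
      - ∑ i, (c i * (2 / (x - X i) ^ 3 - 2 * k / (x - X i) ^ 2
          + k ^ 2 * (1 / (x - X i) - 1 / z)) * E) • a i
      + ∑ i, ((b i ⬝ᵥ ∑ j, (c j * (1 / (x - X j) - 1 / z) * E) • a j) / (x - X i) ^ 2) • a i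
    = ∑ i, (E / (x - X i) ^ 2 * ((x' i - 2 / z + 2 * k) * c i
        + ∑ j ∈ univ.erase i, b i ⬝ᵥ a j * (1 / (X i - X j) - 1 / z) * c j)) • a i := by
  simp only [ha', smul_sub, sum_add_distrib, sum_sub_distrib, sum_smul_sum_erase_smul,
    dotProduct_sum, dotProduct_smul, smul_eq_mul]
  simp only [← sum_sub_distrib, ← sum_add_distrib]
  refine sum_congr rfl fun i _ => ?_
  rw [← add_sum_erase _ _ (mem_univ i), hba, hc']
  match_scalars
  linear_combination (norm := skip) sum_pole_coupling_eq (univ.erase i) (hx i) (fun j _ => hx j)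
    (fun j hj => hX (ne_of_mem_erase hj).symm) (b i ⬝ᵥ a ·) c z E
  -- keeps `ring` from expanding `(x - X i) ^ 2` before inverting it
  generalize x - X i = d
  ring

theorem rational_schroedinger_solution_general (N l : ℕ) (z k : ℂ)
    (X x' : Fin N → ℝ → ℂ) (a b : Fin N → ℝ → Fin l → ℂ)
    (c : Fin N → ℝ → ℂ) (lam : Fin N → ℝ → ℂ)
    (hXne : ∀ (t : ℝ) (i j : Fin N), i ≠ j → X i t ≠ X j t)
    (hX : ∀ (i : Fin N) (t : ℝ), HasDerivAt (X i) (x' i t) t)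
    (hba : ∀ (i : Fin N) (t : ℝ), (∑ α : Fin l, b i t α * a i t α) = 2)
    (heig : ∀ (i : Fin N) (t : ℝ),
      (x' i t - 2 / z + 2 * k) * c i t
        + ∑ j ∈ Finset.univ.erase i,
            (∑ α : Fin l, b i t α * a j t α)
              * (1 / (X i t - X j t) - 1 / z) * c j t = 0)
    (hc : ∀ (i : Fin N) (t : ℝ), HasDerivAt (c i)
      (lam i t * c i t + ∑ j ∈ Finset.univ.erase i,
        (∑ α : Fin l, b i t α * a j t α) * c j t / (X i t - X j t) ^ 2) t)
    (ha : ∀ (i : Fin N) (t : ℝ), HasDerivAt (a i)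
      (-(lam i t) • a i t - ∑ j ∈ Finset.univ.erase i,
        ((∑ α : Fin l, b j t α * a i t α) / (X i t - X j t) ^ 2) • a j t) t) :
    let Ψ : ℂ → ℝ → Fin l → ℂ := fun x t =>
      ∑ i : Fin N,
        (c i t * (1 / (x - X i t) - 1 / z) * Complex.exp (k * x + k ^ 2 * t)) • a i t
    ∀ (x : ℂ) (t : ℝ), (∀ i : Fin N, x ≠ X i t) →
      deriv (fun s : ℝ => Ψ x s) t
        - deriv (fun y : ℂ => deriv (fun y' : ℂ => Ψ y' t) y) x
        + ∑ i : Fin N,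
            ((∑ α : Fin l, b i t α * Ψ x t α) / (x - X i t) ^ 2) • a i t
      = 0 := by
  intro Ψ x t hx
  have hΨt := HasDerivAt.fun_sum fun i (_ : i ∈ univ) =>
    hasDerivAt_ansatz_term_time z k (hc i t) (hX i t) (ha i t) (hx i)
  rw [hΨt.deriv, deriv_deriv_sum_smul univ (fun i => a i t)
    (fun i _ => (eventually_ne_nhds (hx i)).mono fun y hy => hasDerivAt_pole_mul_exp _ z k _ hy)
    (fun i _ => hasDerivAt_pole_mul_exp_deriv _ z k _ (hx i))]
  refine (ansatz_residual_eq hx (fun i j => hXne t i j) (hba · t) (fun _ => rfl)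
    (fun _ => rfl)).trans ?_
  exact sum_eq_zero fun i _ => smul_eq_zero_of_left (mul_eq_zero_of_right _ (heig i t)) _

/-- Forward direction of Theorem 2.1 in the rational case: the ansatz
`Ψ = Σᵢ cᵢ(t)·aᵢ(t)·Φ(x−xᵢ(t),z)·e^{kx+k²t}` built from a solution of the
Lax equations solves the matrix Schrödinger equation
`∂_tΨ − ∂²_xΨ + Σᵢ aᵢ(bᵢ·Ψ)V(x−xᵢ) = 0` with `V(x) = 1/x²`,
`Φ(x,z) = 1/x − 1/z`. -/
theorem rational_schroedinger_solution (N l : ℕ) (z k : ℂ) (hz : z ≠ 0)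
    (X x' : Fin N → ℝ → ℂ) (a b : Fin N → ℝ → Fin l → ℂ)
    (c : Fin N → ℝ → ℂ) (lam : Fin N → ℝ → ℂ)
    (hXne : ∀ (t : ℝ) (i j : Fin N), i ≠ j → X i t ≠ X j t)
    (hX : ∀ (i : Fin N) (t : ℝ), HasDerivAt (X i) (x' i t) t)
    (hba : ∀ (i : Fin N) (t : ℝ), (∑ α : Fin l, b i t α * a i t α) = 2)
    (heig : ∀ (i : Fin N) (t : ℝ),
      (x' i t - 2 / z + 2 * k) * c i t
        + ∑ j ∈ Finset.univ.erase i,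
            (∑ α : Fin l, b i t α * a j t α)
              * (1 / (X i t - X j t) - 1 / z) * c j t = 0)
    (hc : ∀ (i : Fin N) (t : ℝ), HasDerivAt (c i)
      (lam i t * c i t + ∑ j ∈ Finset.univ.erase i,
        (∑ α : Fin l, b i t α * a j t α) * c j t / (X i t - X j t) ^ 2) t)
    (ha : ∀ (i : Fin N) (t : ℝ), HasDerivAt (a i)
      (-(lam i t) • a i t - ∑ j ∈ Finset.univ.erase i,
        ((∑ α : Fin l, b j t α * a i t α) / (X i t - X j t) ^ 2) • a j t) t)
    (hb : ∀ (i : Fin N) (t : ℝ), HasDerivAt (b i)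
      (lam i t • b i t + ∑ j ∈ Finset.univ.erase i,
        ((∑ α : Fin l, b i t α * a j t α) / (X i t - X j t) ^ 2) • b j t) t) :
    let Ψ : ℂ → ℝ → Fin l → ℂ := fun x t =>
      ∑ i : Fin N,
        (c i t * (1 / (x - X i t) - 1 / z) * Complex.exp (k * x + k ^ 2 * t)) • a i t
    ∀ (x : ℂ) (t : ℝ), (∀ i : Fin N, x ≠ X i t) →
      deriv (fun s : ℝ => Ψ x s) t
        - deriv (fun y : ℂ => deriv (fun y' : ℂ => Ψ y' t) y) x
        + ∑ i : Fin N,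
            ((∑ α : Fin l, b i t α * Ψ x t α) / (x - X i t) ^ 2) • a i t
      = 0 :=
  rational_schroedinger_solution_general N l z k X x' a b c lam hXne hX hba heig hc ha
end

section
/- Forward direction of Theorem 2.1 in the trigonometric case: let z, k ∈ ℂ with sinh z ≠ 0; let x_i : ℝ → ℂ be differentiable with sinh(x_i(t) − x_j(t)) ≠ 0 for i ≠ j; let a_i, b_i : ℝ → ℂˡ and c_i : ℝ → ℂ be differentiable; let λ_i : ℝ → ℂ; set f_{ij} = b_i·a_j. Assume for all t: (i) b_i·a_i = 2; (ii) (ẋ_i − 2coth z + 2k)c_i + Σ_{j≠i} f_{ij}(coth(x_i−x_j) − coth z)c_j = 0; (iii) ċ_i = λ_i c_i + Σ_{j≠i} f_{ij} c_j/sinh²(x_i−x_j); (iv) ȧ_i = −λ_i a_i − Σ_{j≠i} a_j f_{ji}/sinh²(x_i−x_j); (v) ḃ_i = λ_i b_i + Σ_{j≠i} b_j f_{ij}/sinh²(x_i−x_j). Then the ℂˡ-valued function Ψ(x,t) = Σ_{i=1}^N c_i(t)·a_i(t)·(coth(x−x_i(t)) − coth z)·e^{kx+k²t} satisfies ∂_t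 Ψ(x,t) − ∂²_x Ψ(x,t) + Σ_{i=1}^N a_i(t)·(b_i(t)·Ψ(x,t))/sinh²(x−x_i(t)) = 0 at every (x,t) with sinh(x − x_i(t)) ≠ 0 for all i. -/
/-!
Differentiating the ansatz, the `k²` terms of `∂_t Ψ` and `∂²_x Ψ` cancel, and so do the `λ_i`
terms coming from `ċ_i` and `ȧ_i` once the double sum in `ȧ_i` is re-indexed onto `a_i`. What
is left is a combination `Σ_i r_i a_i`. In `r_i` the diagonal part is, by `b_i · a_i = 2`, a
multiple of the left side of the eigenvector equation (ii), and the off-diagonal part is a sum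
over `j ≠ i` of `f_ij c_j` times
  `(coth u − coth v) / sinh²(v − u) + (coth v − coth (v − u)) / sinh² u`,
`u = x − x_i`, `v = x − x_j`, which vanishes identically.
-/

open Finset Filter Topology

namespace Complex

noncomputable def coth (w : ℂ) : ℂ := cosh w / sinh w

theorem cosh_div_sinh (w : ℂ) : cosh w / sinh w = coth w := rfl

theorem hasDerivAt_coth {u : ℂ} (hu : sinh u ≠ 0) : HasDerivAt coth (-(1 / sinh u ^ 2)) u := by
  refine ((hasDerivAt_cosh u).div (hasDerivAt_sinh u) hu).congr_deriv ?_
  field_simp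
  linear_combination (-1 : ℂ) * cosh_sq_sub_sinh_sq u

theorem hasDerivAt_one_div_sinh_sq {u : ℂ} (hu : sinh u ≠ 0) :
    HasDerivAt (fun w => 1 / sinh w ^ 2) (-(2 * coth u / sinh u ^ 2)) u := by
  refine ((hasDerivAt_const u 1).fun_div ((hasDerivAt_sinh u).fun_pow 2)
    (pow_ne_zero 2 hu)).congr_deriv ?_
  unfold coth
  field_simp
  ring

theorem coth_sub_coth_div_sinh_sq_add {x p q : ℂ} (hp : sinh (x - p) ≠ 0)
    (hq : sinh (x - q) ≠ 0) (hpq : sinh (p - q) ≠ 0) :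
    (coth (x - p) - coth (x - q)) / sinh (p - q) ^ 2
      + (coth (x - q) - coth (p - q)) / sinh (x - p) ^ 2 = 0 := by
  have hsinh : sinh (p - q) = sinh (x - q) * cosh (x - p) - cosh (x - q) * sinh (x - p) := by
    rw [← sinh_sub, sub_sub_sub_cancel_left]
  have hcosh : cosh (p - q) = cosh (x - q) * cosh (x - p) - sinh (x - q) * sinh (x - p) := by
    rw [← cosh_sub, sub_sub_sub_cancel_left]
  unfold coth
  field_simp
  rw [hsinh, hcosh]
  linear_combination
    (sinh (x - p) ^ 2 * cosh (x - q) - sinh (x - p) * cosh (x - p) * sinh (x - q))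
      * cosh_sq_sub_sinh_sq (x - q)

end Complex

open Complex

theorem hasDerivAt_mul_exp_affine {g : ℂ → ℂ} {g' y : ℂ} (c k e : ℂ) (hg : HasDerivAt g g' y) :
    HasDerivAt (fun w => c * g w * exp (k * w + e)) (c * (k * g y + g') * exp (k * y + e)) y := by
  have hE : HasDerivAt (fun w => exp (k * w + e)) (exp (k * y + e) * k) y := by
    simpa using (((hasDerivAt_id y).const_mul k).add_const e).cexp
  exact ((hg.const_mul c).mul hE).congr_deriv (by ring)

theorem hasDerivAt_coth_mode {c d cz k e y : ℂ} (hy : sinh (y - d) ≠ 0) :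
    HasDerivAt (fun w => c * (coth (w - d) - cz) * exp (k * w + e))
      (c * (k * (coth (y - d) - cz) - 1 / sinh (y - d) ^ 2) * exp (k * y + e)) y :=
  (hasDerivAt_mul_exp_affine c k e
    (((hasDerivAt_coth hy).comp_sub_const y d).sub_const cz)).congr_deriv (by ring)

theorem hasDerivAt_coth_mode_deriv {c d cz k e y : ℂ} (hy : sinh (y - d) ≠ 0) :
    HasDerivAt
      (fun w => c * (k * (coth (w - d) - cz) - 1 / sinh (w - d) ^ 2) * exp (k * w + e))
      (c * (k ^ 2 * (coth (y - d) - cz) - 2 * k / sinh (y - d) ^ 2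
        + 2 * coth (y - d) / sinh (y - d) ^ 2) * exp (k * y + e)) y :=
  (hasDerivAt_mul_exp_affine c k e
    (((((hasDerivAt_coth hy).comp_sub_const y d).sub_const cz).const_mul k).fun_sub
      ((hasDerivAt_one_div_sinh_sq hy).comp_sub_const y d))).congr_deriv (by ring)

section Ansatz

variable {ι F : Type*} [Fintype ι] [NormedAddCommGroup F] [NormedSpace ℂ F]

theorem deriv_deriv_ansatz_space {c d : ι → ℂ} (v : ι → F) (cz k e : ℂ) {x : ℂ}
    (hx : ∀ i, sinh (x - d i) ≠ 0) :
    deriv (fun y => deriv (fun w =>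
        ∑ i, (c i * (coth (w - d i) - cz) * exp (k * w + e)) • v i) y) x
      = ∑ i, (c i * (k ^ 2 * (coth (x - d i) - cz) - 2 * k / sinh (x - d i) ^ 2
          + 2 * coth (x - d i) / sinh (x - d i) ^ 2) * exp (k * x + e)) • v i := by
  have hnear : ∀ᶠ y in 𝓝 x, ∀ i, sinh (y - d i) ≠ 0 := eventually_all.2 fun i =>
    (continuous_sinh.comp (continuous_sub_right (d i))).continuousAt.eventually_ne (hx i)
  have hfirst : deriv (fun w => ∑ i, (c i * (coth (w - d i) - cz) * exp (k * w + e)) • v i)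
      =ᶠ[𝓝 x] fun y => ∑ i, (c i * (k * (coth (y - d i) - cz) - 1 / sinh (y - d i) ^ 2)
        * exp (k * y + e)) • v i :=
    hnear.mono fun y hy =>
      (HasDerivAt.fun_sum fun i _ => (hasDerivAt_coth_mode (hy i)).smul_const (v i)).deriv
  rw [hfirst.deriv_eq]
  exact (HasDerivAt.fun_sum fun i _ =>
    (hasDerivAt_coth_mode_deriv (hx i)).smul_const (v i)).deriv

theorem hasDerivAt_ansatz_time {X c : ι → ℝ → ℂ} {a : ι → ℝ → F} {x' c' : ι → ℂ} {a' : ι → F}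
    {t : ℝ} (x cz k : ℂ) (hX : ∀ i, HasDerivAt (X i) (x' i) t)
    (hc : ∀ i, HasDerivAt (c i) (c' i) t) (ha : ∀ i, HasDerivAt (a i) (a' i) t)
    (hx : ∀ i, sinh (x - X i t) ≠ 0) :
    HasDerivAt
      (fun s : ℝ => ∑ i, (c i s * (coth (x - X i s) - cz) * exp (k * x + k ^ 2 * s)) • a i s)
      (∑ i, ((c i t * (coth (x - X i t) - cz) * exp (k * x + k ^ 2 * t)) • a' i
        + ((c' i * (coth (x - X i t) - cz) + c i t * (x' i / sinh (x - X i t) ^ 2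
          + k ^ 2 * (coth (x - X i t) - cz))) * exp (k * x + k ^ 2 * t)) • a i t)) t := by
  refine HasDerivAt.fun_sum fun i _ => ?_
  have hφ : HasDerivAt (fun s : ℝ => coth (x - X i s) - cz) (x' i / sinh (x - X i t) ^ 2) t := by
    have hcoth := (hasDerivAt_coth (hx i)).comp t ((hX i).const_sub x)
    exact (hcoth.sub_const cz).congr_deriv (by ring)
  have hE : HasDerivAt (fun s : ℝ => exp (k * x + k ^ 2 * s))
      (exp (k * x + k ^ 2 * t) * k ^ 2) t := by
    simpa using (((hasDerivAt_id t).ofReal_comp.const_mul (k ^ 2)).const_add (k * x)).cexp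
  refine ((((hc i).fun_mul hφ).fun_mul hE).smul (ha i)).congr_deriv ?_
  congr 2
  ring

end Ansatz

section Residual

variable {ι m : Type*} [Fintype ι] [DecidableEq ι] [Fintype m]

theorem sum_sum_erase_comm {M : Type*} [AddCommMonoid M] (f : ι → ι → M) :
    ∑ i, ∑ j ∈ univ.erase i, f i j = ∑ i, ∑ j ∈ univ.erase i, f j i := by
  rw [sum_comm' (t' := univ) (s' := fun j => univ.erase j)]
  intro i j
  simp [ne_comm, and_comm]

theorem dotProduct_sum_smul_eq_add_sum_erase {R : Type*} [CommSemiring R] (b : m → R)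
    (a : ι → m → R) (g : ι → R) (i : ι) :
    b ⬝ᵥ ∑ j, g j • a j = g i * (b ⬝ᵥ a i) + ∑ j ∈ univ.erase i, g j * (b ⬝ᵥ a j) := by
  simp only [dotProduct_sum, dotProduct_smul, smul_eq_mul]
  exact (add_sum_erase _ _ (mem_univ i)).symm

theorem sum_smul_eq_of_lax {X lam g : ι → ℂ} {a a' b : ι → m → ℂ}
    (ha : ∀ i, a' i = -lam i • a i
      - ∑ j ∈ univ.erase i, ((b j ⬝ᵥ a i) / sinh (X i - X j) ^ 2) • a j) :
    ∑ i, g i • a' i = ∑ i, (-(g i * lam i)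
      - ∑ j ∈ univ.erase i, g j * (b i ⬝ᵥ a j) / sinh (X i - X j) ^ 2) • a i := by
  simp only [ha, smul_sub, smul_sum, smul_smul, sum_sub_distrib, sub_smul, sum_smul]
  rw [sum_sum_erase_comm]
  congr 1
  · simp only [mul_neg, neg_smul, sum_neg_distrib]
  · refine sum_congr rfl fun i _ => sum_congr rfl fun j _ => ?_
    have hsq : sinh (X j - X i) ^ 2 = sinh (X i - X j) ^ 2 := by
      rw [← neg_sub, sinh_neg, neg_sq]
    rw [hsq, mul_div_assoc]

/-- The three sums are `∂_t Ψ`, `∂²_x Ψ` and the potential term of the ansatz at one point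
`(x, t)`, with `E = e^{kx + k²t}` and `c'`, `a'` the velocities given by the Lax equations. -/
theorem schroedinger_residual_eq_zero {x cz k E : ℂ} {X x' c c' lam : ι → ℂ}
    {a a' b : ι → m → ℂ}
    (hXne : ∀ i j, i ≠ j → sinh (X i - X j) ≠ 0) (hx : ∀ i, sinh (x - X i) ≠ 0)
    (hba : ∀ i, b i ⬝ᵥ a i = 2)
    (heig : ∀ i, (x' i - 2 * cz + 2 * k) * c i
      + ∑ j ∈ univ.erase i, (b i ⬝ᵥ a j) * (coth (X i - X j) - cz) * c j = 0)
    (hc : ∀ i, c' i = lam i * c i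
      + ∑ j ∈ univ.erase i, (b i ⬝ᵥ a j) * c j / sinh (X i - X j) ^ 2)
    (ha : ∀ i, a' i = -lam i • a i
      - ∑ j ∈ univ.erase i, ((b j ⬝ᵥ a i) / sinh (X i - X j) ^ 2) • a j) :
    ∑ i, ((c i * (coth (x - X i) - cz) * E) • a' i
        + ((c' i * (coth (x - X i) - cz) + c i * (x' i / sinh (x - X i) ^ 2
          + k ^ 2 * (coth (x - X i) - cz))) * E) • a i)
      - ∑ i, (c i * (k ^ 2 * (coth (x - X i) - cz) - 2 * k / sinh (x - X i) ^ 2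
          + 2 * coth (x - X i) / sinh (x - X i) ^ 2) * E) • a i
      + ∑ i, ((b i ⬝ᵥ ∑ j, (c j * (coth (x - X j) - cz) * E) • a j)
          / sinh (x - X i) ^ 2) • a i
      = 0 := by
  rw [sum_add_distrib, sum_smul_eq_of_lax ha, ← sum_add_distrib, ← sum_sub_distrib,
    ← sum_add_distrib]
  refine sum_eq_zero fun i _ => ?_
  rw [← add_smul, ← sub_smul, ← add_smul]
  refine smul_eq_zero_of_left ?_ _
  rw [hc i, dotProduct_sum_smul_eq_add_sum_erase _ _ _ i, hba i]
  have hoff_diagonal : E * ((coth (x - X i) - cz)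
        * ∑ j ∈ univ.erase i, (b i ⬝ᵥ a j) * c j / sinh (X i - X j) ^ 2)
      - ∑ j ∈ univ.erase i,
          c j * (coth (x - X j) - cz) * E * (b i ⬝ᵥ a j) / sinh (X i - X j) ^ 2
      + (∑ j ∈ univ.erase i, c j * (coth (x - X j) - cz) * E * (b i ⬝ᵥ a j)
        - E * ∑ j ∈ univ.erase i, (b i ⬝ᵥ a j) * (coth (X i - X j) - cz) * c j)
          / sinh (x - X i) ^ 2 = 0 := by
    simp only [mul_sum, sum_div, ← sum_sub_distrib, ← sum_add_distrib]
    refine sum_eq_zero fun j hj => ?_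
    have hkey :=
      coth_sub_coth_div_sinh_sq_add (hx i) (hx j) (hXne i j (ne_of_mem_erase hj).symm)
    linear_combination E * (b i ⬝ᵥ a j) * c j * hkey
  linear_combination (E / sinh (x - X i) ^ 2) * heig i + hoff_diagonal

end Residual

theorem trigonometric_schroedinger_solution_general (N l : ℕ) (z k : ℂ)
    (X x' : Fin N → ℝ → ℂ) (a b : Fin N → ℝ → Fin l → ℂ)
    (c : Fin N → ℝ → ℂ) (lam : Fin N → ℝ → ℂ)
    (hXne : ∀ (t : ℝ) (i j : Fin N), i ≠ j → Complex.sinh (X i t - X j t) ≠ 0)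
    (hX : ∀ (i : Fin N) (t : ℝ), HasDerivAt (X i) (x' i t) t)
    (hba : ∀ (i : Fin N) (t : ℝ), (∑ α : Fin l, b i t α * a i t α) = 2)
    (heig : ∀ (i : Fin N) (t : ℝ),
      (x' i t - 2 * (Complex.cosh z / Complex.sinh z) + 2 * k) * c i t
        + ∑ j ∈ Finset.univ.erase i,
            (∑ α : Fin l, b i t α * a j t α)
              * (Complex.cosh (X i t - X j t) / Complex.sinh (X i t - X j t)
                  - Complex.cosh z / Complex.sinh z) * c j t = 0)
    (hc : ∀ (i : Fin N) (t : ℝ), HasDerivAt (c i)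
      (lam i t * c i t + ∑ j ∈ Finset.univ.erase i,
        (∑ α : Fin l, b i t α * a j t α) * c j t
          / Complex.sinh (X i t - X j t) ^ 2) t)
    (ha : ∀ (i : Fin N) (t : ℝ), HasDerivAt (a i)
      (-(lam i t) • a i t - ∑ j ∈ Finset.univ.erase i,
        ((∑ α : Fin l, b j t α * a i t α)
          / Complex.sinh (X i t - X j t) ^ 2) • a j t) t) :
    let Ψ : ℂ → ℝ → Fin l → ℂ := fun x t =>
      ∑ i : Fin N,
        (c i t * (Complex.cosh (x - X i t) / Complex.sinh (x - X i t)
              - Complex.cosh z / Complex.sinh z)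
          * Complex.exp (k * x + k ^ 2 * t)) • a i t
    ∀ (x : ℂ) (t : ℝ), (∀ i : Fin N, Complex.sinh (x - X i t) ≠ 0) →
      deriv (fun s : ℝ => Ψ x s) t
        - deriv (fun y : ℂ => deriv (fun y' : ℂ => Ψ y' t) y) x
        + ∑ i : Fin N,
            ((∑ α : Fin l, b i t α * Ψ x t α)
              / Complex.sinh (x - X i t) ^ 2) • a i t
      = 0 := by
  intro Ψ x t hx
  simp only [Ψ, cosh_div_sinh] at heig ⊢
  rw [(hasDerivAt_ansatz_time x (coth z) k (hX · t) (hc · t) (ha · t) hx).deriv,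
    deriv_deriv_ansatz_space _ _ _ _ hx]
  exact schroedinger_residual_eq_zero (hXne t) hx (hba · t) (heig · t) (fun _ => rfl)
    (fun _ => rfl)

/-- Forward direction of Theorem 2.1 in the trigonometric case: the ansatz
`Ψ = Σᵢ cᵢ(t)·aᵢ(t)·Φ(x−xᵢ(t),z)·e^{kx+k²t}` built from a solution of the
Lax equations solves the matrix Schrödinger equation
`∂_tΨ − ∂²_xΨ + Σᵢ aᵢ(bᵢ·Ψ)V(x−xᵢ) = 0` with `V(x) = 1/sinh²x`,
`Φ(x,z) = coth x − coth z`. -/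
theorem trigonometric_schroedinger_solution (N l : ℕ) (z k : ℂ)
    (hz : Complex.sinh z ≠ 0)
    (X x' : Fin N → ℝ → ℂ) (a b : Fin N → ℝ → Fin l → ℂ)
    (c : Fin N → ℝ → ℂ) (lam : Fin N → ℝ → ℂ)
    (hXne : ∀ (t : ℝ) (i j : Fin N), i ≠ j → Complex.sinh (X i t - X j t) ≠ 0)
    (hX : ∀ (i : Fin N) (t : ℝ), HasDerivAt (X i) (x' i t) t)
    (hba : ∀ (i : Fin N) (t : ℝ), (∑ α : Fin l, b i t α * a i t α) = 2)
    (heig : ∀ (i : Fin N) (t : ℝ),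
      (x' i t - 2 * (Complex.cosh z / Complex.sinh z) + 2 * k) * c i t
        + ∑ j ∈ Finset.univ.erase i,
            (∑ α : Fin l, b i t α * a j t α)
              * (Complex.cosh (X i t - X j t) / Complex.sinh (X i t - X j t)
                  - Complex.cosh z / Complex.sinh z) * c j t = 0)
    (hc : ∀ (i : Fin N) (t : ℝ), HasDerivAt (c i)
      (lam i t * c i t + ∑ j ∈ Finset.univ.erase i,
        (∑ α : Fin l, b i t α * a j t α) * c j t
          / Complex.sinh (X i t - X j t) ^ 2) t)
    (ha : ∀ (i : Fin N) (t : ℝ), HasDerivAt (a i)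
      (-(lam i t) • a i t - ∑ j ∈ Finset.univ.erase i,
        ((∑ α : Fin l, b j t α * a i t α)
          / Complex.sinh (X i t - X j t) ^ 2) • a j t) t)
    (hb : ∀ (i : Fin N) (t : ℝ), HasDerivAt (b i)
      (lam i t • b i t + ∑ j ∈ Finset.univ.erase i,
        ((∑ α : Fin l, b i t α * a j t α)
          / Complex.sinh (X i t - X j t) ^ 2) • b j t) t) :
    let Ψ : ℂ → ℝ → Fin l → ℂ := fun x t =>
      ∑ i : Fin N,
        (c i t * (Complex.cosh (x - X i t) / Complex.sinh (x - X i t)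
              - Complex.cosh z / Complex.sinh z)
          * Complex.exp (k * x + k ^ 2 * t)) • a i t
    ∀ (x : ℂ) (t : ℝ), (∀ i : Fin N, Complex.sinh (x - X i t) ≠ 0) →
      deriv (fun s : ℝ => Ψ x s) t
        - deriv (fun y : ℂ => deriv (fun y' : ℂ => Ψ y' t) y) x
        + ∑ i : Fin N,
            ((∑ α : Fin l, b i t α * Ψ x t α)
              / Complex.sinh (x - X i t) ^ 2) • a i t
      = 0 :=
  trigonometric_schroedinger_solution_general N l z k X x' a b c lam hXne hX hba heig hc ha
end

section
/- Proposition 4.4, trigonometric case (relation between eigenvectors above z = ±∞): let x_i : ℝ → ℂ be differentiable with sinh(x_i(t) − x_j(t)) ≠ 0 for i ≠ j, let f_{ij} : ℝ → ℂ with f_{ii} = 2, let λ_i : ℝ → ℂ, and let χ ∈ ℂ. Define the N×N matrices M(t) by M_{ii} = −λ_i, M_{ij} = −f_{ij}/sinh²(x_i−x_j) (i ≠ j), and L^±(t) by L^±_{ii} = ẋ_i ∓ 2, L^±_{ij} = f_{ij}(coth(x_i−x_j) ∓ 1) (i ≠ j). Suppose C : ℝ → ℂ^N is differentiable with Ċ(t)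 = −M(t)C(t) and (L⁻(t) + 2χ·I)C(t) = 0 for all t. Then D(t) := e^{−4(χ+1)t}·diag(e^{−2x_1(t)},…,e^{−2x_N(t)})·C(t) satisfies Ḋ(t) = −M(t)D(t) and (L⁺(t) + 2(χ+2)·I)D(t) = 0 for all t. -/
/-!
Write `E = diag(e^{-2xᵢ})`. The identity `(coth(a-b) - 1) e^{-2b} = (coth(a-b) + 1) e^{-2a}`
gives the intertwining `(L⁺ + 2(χ+2)) E = E (L⁻ + 2χ)`, so `E` carries the `-2χ`-eigenvectors
of `L⁻` to `-2(χ+2)`-eigenvectors of `L⁺`. For the flow, the identity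
`(e^{-2b} - e^{-2a}) / sinh²(a-b) = 2 e^{-2a} (coth(a-b) + 1)` gives
`M E = E (M + 2 (diag(ẋ + 2) - L⁻))`; on a `-2χ`-eigenvector of `L⁻` the correction term is
`2Ẋ + 4(χ+1)`, which is exactly what differentiating `e^{-4(χ+1)t} E` produces.
-/

open Matrix Complex

lemma coth_sub_one_mul_exp_neg_two {a b : ℂ} (h : sinh (a - b) ≠ 0) :
    (cosh (a - b) / sinh (a - b) - 1) * exp (-2 * b)
      = (cosh (a - b) / sinh (a - b) + 1) * exp (-2 * a) := by
  rw [div_sub_one h, div_add_one h, cosh_sub_sinh, cosh_add_sinh, div_mul_eq_mul_div,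
    div_mul_eq_mul_div, ← exp_add, ← exp_add]
  ring_nf

lemma exp_neg_two_sub_div_sinh_sq {a b : ℂ} (h : sinh (a - b) ≠ 0) :
    (exp (-2 * b) - exp (-2 * a)) / sinh (a - b) ^ 2
      = 2 * exp (-2 * a) * (cosh (a - b) / sinh (a - b) + 1) := by
  have hb : exp (-2 * b) = exp (-a - b) * exp (a - b) := by rw [← exp_add]; ring_nf
  have ha : exp (-2 * a) = exp (-a - b) * exp (-(a - b)) := by rw [← exp_add]; ring_nf
  have hinv : exp (a - b) * exp (-(a - b)) = 1 := by rw [← exp_add]; simp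
  rw [div_add_one h, cosh_add_sinh, hb, ha, ← mul_sub, ← two_sinh]
  field_simp
  linear_combination -hinv

noncomputable section

variable {n : Type*} [DecidableEq n]

/- The limits `L⁺`, `L⁻` of the Lax matrix as `z → +∞`, `z → -∞`, at positions `q` and
velocities `p`. -/
def trigLaxPlus (q p : n → ℂ) (f : n → n → ℂ) : Matrix n n ℂ :=
  of fun i j => if i = j then p i - 2 else f i j * (cosh (q i - q j) / sinh (q i - q j) - 1)

def trigLaxMinus (q p : n → ℂ) (f : n → n → ℂ) : Matrix n n ℂ :=
  of fun i j => if i = j then p i + 2 else f i j * (cosh (q i - q j) / sinh (q i - q j) + 1)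

def trigLaxM (q lam : n → ℂ) (f : n → n → ℂ) : Matrix n n ℂ :=
  of fun i j => if i = j then -lam i else -f i j / sinh (q i - q j) ^ 2

def expDiag (q : n → ℂ) : Matrix n n ℂ :=
  diagonal fun i => exp (-2 * q i)

end

variable {n : Type*} [DecidableEq n] [Fintype n] {q : n → ℂ}

theorem trigLaxPlus_add_smul_one_mul_expDiag (hq : Pairwise fun i j => sinh (q i - q j) ≠ 0)
    (p : n → ℂ) (f : n → n → ℂ) (χ : ℂ) :
    (trigLaxPlus q p f + (2 * (χ + 2)) • 1) * expDiag q
      = expDiag q * (trigLaxMinus q p f + (2 * χ) • 1) := by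
  ext i j
  simp only [expDiag, add_mul, mul_add, mul_diagonal, diagonal_mul, trigLaxPlus, trigLaxMinus,
    Matrix.add_apply, Matrix.smul_apply, one_apply, of_apply, smul_eq_mul]
  rcases eq_or_ne i j with rfl | hij
  · simp only [if_true]; ring
  · simp only [if_neg hij, mul_zero, add_zero]
    rw [mul_assoc, coth_sub_one_mul_exp_neg_two (hq hij)]
    ring

theorem trigLaxPlus_add_smul_one_mulVec_expDiag_mulVec
    (hq : Pairwise fun i j => sinh (q i - q j) ≠ 0) {p c : n → ℂ} {f : n → n → ℂ} {χ : ℂ}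
    (hc : (trigLaxMinus q p f + (2 * χ) • 1) *ᵥ c = 0) :
    (trigLaxPlus q p f + (2 * (χ + 2)) • 1) *ᵥ (expDiag q *ᵥ c) = 0 := by
  rw [mulVec_mulVec, trigLaxPlus_add_smul_one_mul_expDiag hq, ← mulVec_mulVec, hc, mulVec_zero]

theorem trigLaxM_mul_expDiag (hq : Pairwise fun i j => sinh (q i - q j) ≠ 0)
    (lam p : n → ℂ) (f : n → n → ℂ) :
    trigLaxM q lam f * expDiag q = expDiag q *
      (trigLaxM q lam f + 2 • (diagonal (fun i => p i + 2) - trigLaxMinus q p f)) := by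
  ext i j
  simp only [expDiag, mul_add, mul_diagonal, diagonal_mul, trigLaxM, trigLaxMinus,
    Matrix.add_apply, Matrix.smul_apply, Matrix.sub_apply, diagonal_apply, of_apply]
  rcases eq_or_ne i j with rfl | hij
  · simp only [if_true]; ring
  · simp only [if_neg hij]
    have hexp := exp_neg_two_sub_div_sinh_sq (hq hij)
    rw [sub_div] at hexp
    linear_combination (-f i j) * hexp

theorem trigLaxM_mul_expDiag_mulVec (hq : Pairwise fun i j => sinh (q i - q j) ≠ 0)
    {lam p c : n → ℂ} {f : n → n → ℂ} {χ : ℂ}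
    (hc : (trigLaxMinus q p f + (2 * χ) • 1) *ᵥ c = 0) :
    (trigLaxM q lam f * expDiag q) *ᵥ c
      = expDiag q *ᵥ
          (trigLaxM q lam f *ᵥ c + (2 : ℂ) • diagonal p *ᵥ c + (4 * (χ + 1)) • c) := by
  have hLc : trigLaxMinus q p f *ᵥ c = -(2 * χ) • c := by
    rw [add_mulVec, smul_mulVec, one_mulVec, add_eq_zero_iff_eq_neg] at hc
    rw [hc, neg_smul]
  rw [trigLaxM_mul_expDiag hq lam p, ← mulVec_mulVec, add_mulVec, smul_mulVec, sub_mulVec, hLc]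
  congr 1
  ext i
  simp only [mulVec_diagonal, Pi.add_apply, Pi.smul_apply, Pi.sub_apply, smul_eq_mul]
  ring

theorem hasDerivAt_expDiag_mulVec {q : n → ℝ → ℂ} {q' : n → ℂ} {C : ℝ → n → ℂ} {C' : n → ℂ}
    {t : ℝ} (hq : ∀ i, HasDerivAt (q i) (q' i) t) (hC : HasDerivAt C C' t) :
    HasDerivAt (fun s => expDiag (fun i => q i s) *ᵥ C s)
      (expDiag (fun i => q i t) *ᵥ (C' - (2 : ℂ) • diagonal q' *ᵥ C t)) t := by
  rw [hasDerivAt_pi]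
  intro i
  simp only [expDiag, mulVec_diagonal, Pi.sub_apply, Pi.smul_apply, smul_eq_mul]
  exact (((hq i).const_mul (-2 : ℂ)).cexp.mul (hasDerivAt_pi.mp hC i)).congr_deriv (by ring)

theorem hasDerivAt_exp_smul_expDiag_mulVec {q : n → ℝ → ℂ} {q' lam : n → ℂ}
    {f : n → n → ℂ} {C : ℝ → n → ℂ} {χ : ℂ} {t : ℝ}
    (hq : Pairwise fun i j => sinh (q i t - q j t) ≠ 0) (hq' : ∀ i, HasDerivAt (q i) (q' i) t)
    (hC : HasDerivAt C (-(trigLaxM (fun i => q i t) lam f *ᵥ C t)) t)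
    (hc : (trigLaxMinus (fun i => q i t) q' f + (2 * χ) • 1) *ᵥ C t = 0) :
    HasDerivAt (fun s : ℝ => exp (-4 * (χ + 1) * s) • expDiag (fun i => q i s) *ᵥ C s)
      (-(trigLaxM (fun i => q i t) lam f *ᵥ
        (exp (-4 * (χ + 1) * t) • expDiag (fun i => q i t) *ᵥ C t))) t := by
  have hscalar : HasDerivAt (fun s : ℝ => exp (-4 * (χ + 1) * s))
      (exp (-4 * (χ + 1) * t) * (-4 * (χ + 1))) t := by
    simpa using ((hasDerivAt_id (t : ℂ)).const_mul (-4 * (χ + 1))).cexp.comp_ofReal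
  refine (hscalar.smul (hasDerivAt_expDiag_mulVec hq' hC)).congr_deriv ?_
  rw [mulVec_smul, mulVec_mulVec, trigLaxM_mul_expDiag_mulVec hq hc]
  simp only [mulVec_add, mulVec_sub, mulVec_smul, mulVec_neg]
  module

theorem trigonometric_eigenvector_relation_general (N : ℕ)
    (x x' : Fin N → ℝ → ℂ) (f : Fin N → Fin N → ℝ → ℂ)
    (lam : Fin N → ℝ → ℂ) (χ : ℂ) (C : ℝ → Fin N → ℂ)
    (hxne : ∀ (t : ℝ) (i j : Fin N), i ≠ j → Complex.sinh (x i t - x j t) ≠ 0)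
    (hx : ∀ (i : Fin N) (t : ℝ), HasDerivAt (x i) (x' i t) t) :
    let M : ℝ → Matrix (Fin N) (Fin N) ℂ := fun t => Matrix.of fun i j =>
      if i = j then -lam i t else -f i j t / Complex.sinh (x i t - x j t) ^ 2
    let Lplus : ℝ → Matrix (Fin N) (Fin N) ℂ := fun t => Matrix.of fun i j =>
      if i = j then x' i t - 2 else
        f i j t * (Complex.cosh (x i t - x j t) / Complex.sinh (x i t - x j t) - 1)
    let Lminus : ℝ → Matrix (Fin N) (Fin N) ℂ := fun t => Matrix.of fun i j =>
      if i = j then x' i t + 2 else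
        f i j t * (Complex.cosh (x i t - x j t) / Complex.sinh (x i t - x j t) + 1)
    (∀ t : ℝ, HasDerivAt C (-(M t).mulVec (C t)) t) →
    (∀ t : ℝ, (Lminus t + (2 * χ) • (1 : Matrix (Fin N) (Fin N) ℂ)).mulVec (C t) = 0) →
    let D : ℝ → Fin N → ℂ := fun t =>
      Complex.exp (-4 * (χ + 1) * t) •
        (Matrix.diagonal (fun i => Complex.exp (-2 * x i t))).mulVec (C t)
    (∀ t : ℝ, HasDerivAt D (-(M t).mulVec (D t)) t) ∧
    (∀ t : ℝ,
      (Lplus t + (2 * (χ + 2)) • (1 : Matrix (Fin N) (Fin N) ℂ)).mulVec (D t) = 0) := by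
  intro M Lplus Lminus hC hLC D
  refine ⟨fun t => hasDerivAt_exp_smul_expDiag_mulVec (fun i j => hxne t i j) (fun i => hx i t)
    (hC t) (hLC t), fun t => ?_⟩
  rw [mulVec_smul]
  exact smul_eq_zero_of_right _
    (trigLaxPlus_add_smul_one_mulVec_expDiag_mulVec (fun i j => hxne t i j) (hLC t))

/-- Proposition 4.4, trigonometric case: if `C` evolves by `Ċ = −MC` and is an
eigenvector `(L⁻ + 2χI)C = 0`, then
`D(t) = e^{−4(χ+1)t}·diag(e^{−2xᵢ(t)})·C(t)` evolves by `Ḋ = −MD` and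
satisfies `(L⁺ + 2(χ+2)I)D = 0`. -/
theorem trigonometric_eigenvector_relation (N : ℕ)
    (x x' : Fin N → ℝ → ℂ) (f : Fin N → Fin N → ℝ → ℂ)
    (lam : Fin N → ℝ → ℂ) (χ : ℂ) (C : ℝ → Fin N → ℂ)
    (hxne : ∀ (t : ℝ) (i j : Fin N), i ≠ j → Complex.sinh (x i t - x j t) ≠ 0)
    (hx : ∀ (i : Fin N) (t : ℝ), HasDerivAt (x i) (x' i t) t)
    (hfii : ∀ (i : Fin N) (t : ℝ), f i i t = 2) :
    let M : ℝ → Matrix (Fin N) (Fin N) ℂ := fun t => Matrix.of fun i j =>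
      if i = j then -lam i t else -f i j t / Complex.sinh (x i t - x j t) ^ 2
    let Lplus : ℝ → Matrix (Fin N) (Fin N) ℂ := fun t => Matrix.of fun i j =>
      if i = j then x' i t - 2 else
        f i j t * (Complex.cosh (x i t - x j t) / Complex.sinh (x i t - x j t) - 1)
    let Lminus : ℝ → Matrix (Fin N) (Fin N) ℂ := fun t => Matrix.of fun i j =>
      if i = j then x' i t + 2 else
        f i j t * (Complex.cosh (x i t - x j t) / Complex.sinh (x i t - x j t) + 1)
    (∀ t : ℝ, HasDerivAt C (-(M t).mulVec (C t)) t) →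
    (∀ t : ℝ, (Lminus t + (2 * χ) • (1 : Matrix (Fin N) (Fin N) ℂ)).mulVec (C t) = 0) →
    let D : ℝ → Fin N → ℂ := fun t =>
      Complex.exp (-4 * (χ + 1) * t) •
        (Matrix.diagonal (fun i => Complex.exp (-2 * x i t))).mulVec (C t)
    (∀ t : ℝ, HasDerivAt D (-(M t).mulVec (D t)) t) ∧
    (∀ t : ℝ,
      (Lplus t + (2 * (χ + 2)) • (1 : Matrix (Fin N) (Fin N) ℂ)).mulVec (D t) = 0) :=
  trigonometric_eigenvector_relation_general N x x' f lam χ C hxne hx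
end
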